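/- arXiv:1905.09134 — 8 statements merged into one kernel-verified Lean document; each statement's English description precedes it below -/
import Mathlib

section
/- Let d > 4 be a positive integer and let Z_d = {z ∈ ℂ : z^d = 1} be the set of d-th roots of unity in ℂ. If A and B are finite subsets of ℂ with A + B = Z_d, then A or B is a singleton (i.e., |A| = 1 or |B| = 1). -/
open Pointwise

/-! Every sum `a + b` is a root of unity, so lies on the unit circle. Two distinct elements
`a₁ ≠ a₂` of `A` thus put `B` on the unit circles centred at `-a₁` and `-a₂`, which meet in at
most two points. If neither summand were a singleton, both would have at most two elements, and
`A + B` at most four, fewer than the `d > 4` roots of unity. -/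

open Module in
theorem EuclideanGeometry.card_le_two_of_forall_dist_eq_of_finrank_eq_two
    {V P : Type*} [NormedAddCommGroup V] [InnerProductSpace ℝ V] [MetricSpace P]
    [NormedAddTorsor V P] [FiniteDimensional ℝ V] (hd : finrank ℝ V = 2) {c₁ c₂ : P}
    {r₁ r₂ : ℝ} (hc : c₁ ≠ c₂) {S : Finset P}
    (hS : ∀ p ∈ S, dist p c₁ = r₁ ∧ dist p c₂ = r₂) : S.card ≤ 2 := by
  by_contra! hS3
  obtain ⟨p₁, p₂, p, hp₁, hp₂, hp, h₁₂, h₁, h₂⟩ := Finset.two_lt_card_iff.mp hS3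
  rcases eq_of_dist_eq_of_dist_eq_of_finrank_eq_two hd hc h₁₂ (hS _ hp₁).1 (hS _ hp₂).1
    (hS _ hp).1 (hS _ hp₁).2 (hS _ hp₂).2 (hS _ hp).2 with rfl | rfl
  exacts [h₁ rfl, h₂ rfl]

theorem Complex.card_le_two_of_one_lt_card_of_add_pow_eq_one {d : ℕ} (hd : d ≠ 0)
    {A B : Finset ℂ} (hAB : ∀ a ∈ A, ∀ b ∈ B, (a + b) ^ d = 1) (hA : 1 < A.card) :
    B.card ≤ 2 := by
  obtain ⟨a₁, ha₁, a₂, ha₂, ha⟩ := Finset.one_lt_card.mp hA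
  have hdist : ∀ a ∈ A, ∀ b ∈ B, dist b (-a) = 1 := fun a ha b hb => by
    rw [Complex.dist_eq, sub_neg_eq_add, add_comm]
    exact Complex.norm_eq_one_of_pow_eq_one (hAB a ha b hb) hd
  exact EuclideanGeometry.card_le_two_of_forall_dist_eq_of_finrank_eq_two
    Complex.finrank_real_complex (neg_injective.ne ha)
    fun b hb => ⟨hdist a₁ ha₁ b hb, hdist a₂ ha₂ b hb⟩

theorem sumset_decomposition_roots_of_unity_complex
    (d : ℕ) (hd : 4 < d) (A B : Finset ℂ)
    (h : ((↑A + ↑B : Set ℂ)) = {z : ℂ | z ^ d = 1}) :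
    A.card = 1 ∨ B.card = 1 := by
  have hAB : ∀ a ∈ A, ∀ b ∈ B, (a + b) ^ d = 1 := fun a ha b hb => by
    simpa only [h, Set.mem_ofPred_eq] using Set.add_mem_add (s := (A : Set ℂ)) ha hb
  have hsum : A + B = Polynomial.nthRootsFinset d (1 : ℂ) := by
    apply Finset.coe_injective
    ext z
    simp [Finset.coe_add, h, Polynomial.mem_nthRootsFinset (by omega : 0 < d)]
  have hcard : (A + B).card = d := by
    rw [hsum]
    exact (Complex.isPrimitiveRoot_exp d (by omega)).card_nthRootsFinset
  have hne : (A + B).Nonempty := Finset.card_pos.mp (by omega)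
  by_contra! hneither
  have hA : 1 < A.card := by have := hne.of_add_left.card_pos; omega
  have hB : 1 < B.card := by have := hne.of_add_right.card_pos; omega
  have hBA : ∀ b ∈ B, ∀ a ∈ A, (b + a) ^ d = 1 := fun b hb a ha => add_comm a b ▸ hAB a ha b hb
  have hB2 := Complex.card_le_two_of_one_lt_card_of_add_pow_eq_one (by omega) hAB hA
  have hA2 := Complex.card_le_two_of_one_lt_card_of_add_pow_eq_one (by omega) hBA hB
  have := Finset.card_add_le.trans (Nat.mul_le_mul hA2 hB2)
  omega
end

section
/- Let p be a prime and let d be a positive integer with d dividing p − 1 and d < p − 1. Let Z_d = {z ∈ 𝔽_p : z^d = 1}. If A, B ⊆ 𝔽_p are finite sets with A + B ⊆ Z_d ∪ {0}, then |A| · |B| ≤ d + |B ∩ (−A)|, where −A = {−a : a ∈ A}. -/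
open Pointwise Polynomial Finset

private theorem weights_pow_sum {K : Type*} [Field K] [DecidableEq K]
    (A : Finset K) (hA : A.Nonempty) {s : ℕ} (hs : s ≤ A.card - 1) :
    ∑ a ∈ A, Lagrange.nodalWeight A id a * a ^ s = if s = A.card - 1 then 1 else 0 := by
  have hinj : Set.InjOn (id : K → K) A := fun x _ y _ h => h
  have hcard : 0 < A.card := hA.card_pos
  have hdeg : (X ^ s : K[X]).degree < A.card := by
    rw [degree_X_pow]
    exact_mod_cast (by omega : s < A.card)
  have hinterp := Lagrange.eq_interpolate hinj hdeg
  have hc := congrArg (fun q : K[X] => q.coeff (A.card - 1)) hinterp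
  simp only [Lagrange.interpolate_apply] at hc
  rw [finset_sum_coeff] at hc
  have hbasis : ∀ a ∈ A, (Lagrange.basis A id a).coeff (A.card - 1) =
      Lagrange.nodalWeight A id a := by
    intro a ha
    rw [Lagrange.basis_eq_prod_sub_inv_mul_nodal_div ha,
      ← Lagrange.nodal_erase_eq_nodal_div ha, coeff_C_mul]
    have hmonic : (Lagrange.nodal (A.erase a) id).Monic := Lagrange.nodal_monic
    have hdeg' : (Lagrange.nodal (A.erase a) id).natDegree = A.card - 1 := by
      rw [Lagrange.natDegree_nodal, card_erase_of_mem ha]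
    rw [← hdeg', hmonic.coeff_natDegree, mul_one]
  have hX : (X ^ s : K[X]).coeff (A.card - 1) = if s = A.card - 1 then 1 else 0 := by
    rw [coeff_X_pow]
    simp [eq_comm]
  rw [hX] at hc
  rw [hc]
  refine Finset.sum_congr rfl fun a ha => ?_
  rw [coeff_C_mul, hbasis a ha]
  simp [mul_comm]

private theorem weights_shift_sum {K : Type*} [Field K] [DecidableEq K]
    (A : Finset K) (hA : A.Nonempty) (x : K) {t : ℕ} (ht : t ≤ A.card - 1) :
    ∑ a ∈ A, Lagrange.nodalWeight A id a * (x + a) ^ t = if t = A.card - 1 then 1 else 0 := by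
  have expand : ∀ a : K, (x + a) ^ t =
      ∑ k ∈ Finset.range (t + 1), x ^ k * a ^ (t - k) * (t.choose k : K) := fun a => add_pow x a t
  simp_rw [expand, Finset.mul_sum]
  rw [Finset.sum_comm]
  have hterm : ∀ k ∈ Finset.range (t + 1),
      ∑ a ∈ A, Lagrange.nodalWeight A id a * (x ^ k * a ^ (t - k) * (t.choose k : K)) =
      x ^ k * (t.choose k : K) * (if t - k = A.card - 1 then 1 else 0) := by
    intro k _
    rw [← weights_pow_sum A hA (le_trans (Nat.sub_le t k) ht), Finset.mul_sum]
    exact Finset.sum_congr rfl fun a _ => by ring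
  rw [Finset.sum_congr rfl hterm]
  by_cases htm : t = A.card - 1
  · rw [if_pos htm]
    rw [Finset.sum_eq_single 0]
    · simp [htm]
    · intro k hk hk0
      rw [Finset.mem_range] at hk
      rw [if_neg (by omega), mul_zero]
    · intro hcon
      exact absurd (Finset.mem_range.mpr (Nat.succ_pos t)) hcon
  · rw [if_neg htm]
    refine Finset.sum_eq_zero fun k hk => ?_
    rw [Finset.mem_range] at hk
    rw [if_neg (by omega), mul_zero]

theorem sumset_in_roots_of_unity_bound
    (p : ℕ) (hp : p.Prime) (d : ℕ) (hd : 0 < d)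
    (hdvd : d ∣ p - 1) (hlt : d < p - 1)
    (A B : Finset (ZMod p))
    (h : (↑(A + B) : Set (ZMod p)) ⊆ {z : ZMod p | z ^ d = 1} ∪ {0}) :
    A.card * B.card ≤ d + (B ∩ (-A)).card := by
  classical
  haveI : Fact p.Prime := ⟨hp⟩
  rcases A.eq_empty_or_nonempty with rfl | hA
  · simp
  rcases B.eq_empty_or_nonempty with rfl | hB
  · simp
  have hp1 : 1 < p := hp.one_lt
  set m := A.card with hmdef
  set n := B.card with hndef
  have hm1 : 1 ≤ m := hA.card_pos
  have hsum : ∀ a ∈ A, ∀ b ∈ B, (a + b) ^ d = 1 ∨ a + b = 0 := by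
    intro a ha b hb
    have hmem : a + b ∈ (↑(A + B) : Set (ZMod p)) := by
      exact_mod_cast Finset.add_mem_add ha hb
    rcases h hmem with h1 | h2
    · exact Or.inl h1
    · exact Or.inr h2
  obtain ⟨b₀, hb₀⟩ := hB.exists_mem
  -- m ≤ d + 1
  have hmd : m ≤ d + 1 := by
    set Q : Polynomial (ZMod p) := (X + C b₀) ^ d - 1 with hQ
    have hdQ : Q.degree = d := by
      rw [hQ, degree_sub_eq_left_of_degree_lt]
      · rw [degree_pow, degree_X_add_C]; simp
      · rw [degree_pow, degree_X_add_C, degree_one]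
        simp only [nsmul_eq_mul, mul_one]
        exact_mod_cast Nat.cast_pos.mpr hd
    have hQ0 : Q ≠ 0 := by
      intro h0; rw [h0, degree_zero] at hdQ
      exact absurd hdQ.symm (by simp)
    have hsub : A.erase (-b₀) ⊆ Q.roots.toFinset := by
      intro a ha
      rw [Finset.mem_erase] at ha
      rw [Multiset.mem_toFinset, mem_roots hQ0]
      rcases hsum a ha.2 b₀ hb₀ with h1 | h2
      · simp [hQ, IsRoot, h1]
      · exact absurd (eq_neg_of_add_eq_zero_left h2) ha.1
    have h1 : (A.erase (-b₀)).card ≤ d := by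
      calc (A.erase (-b₀)).card ≤ Q.roots.toFinset.card := Finset.card_le_card hsub
        _ ≤ Multiset.card Q.roots := Multiset.toFinset_card_le _
        _ ≤ Q.natDegree := Q.card_roots'
        _ = d := natDegree_eq_of_degree_eq_some hdQ
    have h2 := Finset.pred_card_le_card_erase (s := A) (a := -b₀)
    omega
  have h2d : 2 * d ≤ p - 1 := by
    obtain ⟨t, ht⟩ := hdvd
    have ht2 : 2 ≤ t := by
      rcases Nat.lt_or_ge t 2 with h' | h'
      · interval_cases t <;> omega
      · exact h'
    calc 2 * d = d * 2 := by ring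
      _ ≤ d * t := Nat.mul_le_mul_left d ht2
      _ = p - 1 := ht.symm
  set N := d + (m - 1) with hN
  have hNp : N < p := by omega
  have hkey : ∀ s, s ≤ m - 1 →
      ∑ a ∈ A, Lagrange.nodalWeight A id a * a ^ s = if s = m - 1 then 1 else 0 :=
    fun s hs => weights_pow_sum A hA hs
  have hkey2 : ∀ (x : ZMod p) (t), t ≤ m - 1 →
      ∑ a ∈ A, Lagrange.nodalWeight A id a * (x + a) ^ t = if t = m - 1 then 1 else 0 :=
    fun x t ht => weights_shift_sum A hA x ht
  set F : Polynomial (ZMod p) :=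
    ∑ a ∈ A, C (Lagrange.nodalWeight A id a) * (X + C a) ^ N with hF
  set G : Polynomial (ZMod p) := F - 1 with hG
  have hFcoeff : ∀ r, F.coeff r =
      (N.choose r : ZMod p) * ∑ a ∈ A, Lagrange.nodalWeight A id a * a ^ (N - r) := by
    intro r
    rw [hF, finset_sum_coeff, Finset.mul_sum]
    refine Finset.sum_congr rfl fun a _ => ?_
    rw [coeff_C_mul, coeff_X_add_C_pow]; ring
  have hdegG : G.natDegree ≤ d := by
    rw [natDegree_le_iff_coeff_eq_zero]
    intro r hr
    rw [hG, coeff_sub, coeff_one, if_neg (by omega : ¬ r = 0), sub_zero, hFcoeff]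
    rcases le_or_gt r N with hrN | hrN
    · rw [hkey (N - r) (by omega), if_neg (by omega), mul_zero]
    · rw [Nat.choose_eq_zero_of_lt hrN]; simp
  have hGd : G.coeff d = (N.choose d : ZMod p) := by
    rw [hG, coeff_sub, coeff_one, if_neg (by omega : ¬ d = 0), sub_zero, hFcoeff,
      (by omega : N - d = m - 1), hkey (m - 1) le_rfl, if_pos rfl, mul_one]
  have hchoose : (N.choose d : ZMod p) ≠ 0 := by
    rw [Ne, ZMod.natCast_eq_zero_iff]
    intro hdvd'
    have h1 : N.choose d ∣ N.factorial :=
      ⟨d.factorial * (N - d).factorial, by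
        rw [← Nat.choose_mul_factorial_mul_factorial (by omega : d ≤ N), mul_assoc]⟩
    have h2 : p ∣ N.factorial := dvd_trans hdvd' h1
    have := (Nat.Prime.dvd_factorial hp).mp h2
    omega
  have hG0 : G ≠ 0 := fun h0 => hchoose (by rw [← hGd, h0, coeff_zero])
  have htayF : ∀ b : ZMod p, (Polynomial.taylor b) F =
      ∑ a ∈ A, C (Lagrange.nodalWeight A id a) * (X + C (b + a)) ^ N := by
    intro b
    rw [hF, map_sum]
    refine Finset.sum_congr rfl fun a _ => ?_
    rw [taylor_apply, mul_comp, C_comp, pow_comp, add_comp, X_comp, C_comp, add_assoc, ← C_add]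
  have htayG : ∀ b ∈ B, ∀ k : ℕ, k < m → (∀ a ∈ A, b + a ≠ 0 ∨ k + 1 < m) →
      ((Polynomial.taylor b) G).coeff k = 0 := by
    intro b hb k hk hcond
    have hFk : ((Polynomial.taylor b) F).coeff k =
        (N.choose k : ZMod p) * (if m - 1 - k = m - 1 then 1 else 0) := by
      rw [htayF b, finset_sum_coeff]
      simp_rw [coeff_C_mul, coeff_X_add_C_pow]
      rw [← hkey2 b (m - 1 - k) (by omega), Finset.mul_sum]
      refine Finset.sum_congr rfl fun a ha => ?_
      have hpow : (b + a) ^ (N - k) = (b + a) ^ (m - 1 - k) := by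
        rcases eq_or_ne (b + a) 0 with h0 | h0
        · rcases hcond a ha with h1 | h1
          · exact absurd h0 h1
          · rw [h0, zero_pow (by omega : N - k ≠ 0), zero_pow (by omega : m - 1 - k ≠ 0)]
        · have h1 : (b + a) ^ d = 1 := by
            rcases hsum a ha b hb with h2 | h2
            · rw [add_comm b a]; exact h2
            · exact absurd (by rw [add_comm]; exact h2) h0
          rw [(by omega : N - k = d + (m - 1 - k)), pow_add, h1, one_mul]
      rw [hpow]; ring
    rw [hG, map_sub, coeff_sub, hFk, taylor_one, coeff_C]
    by_cases hk0 : k = 0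
    · subst hk0
      rw [if_pos (by omega), if_pos rfl]
      simp
    · rw [if_neg (by omega), if_neg hk0]
      simp
  have hdvdG : ∀ b ∈ B, (X - C b) ^ (if b ∈ -A then m - 1 else m) ∣ G := by
    intro b hb
    set μ := if b ∈ -A then m - 1 else m with hμ
    have hμm : μ ≤ m := by rw [hμ]; split <;> omega
    have hXdvd : X ^ μ ∣ (Polynomial.taylor b) G := by
      rw [X_pow_dvd_iff]
      intro k hk
      refine htayG b hb k (lt_of_lt_of_le hk hμm) ?_
      intro a ha
      rcases eq_or_ne (b + a) 0 with h0 | h0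
      · right
        have hbA : b ∈ -A := by
          rw [Finset.mem_neg']
          have hba : -b = a := by linear_combination -h0
          rw [hba]; exact ha
        rw [hμ, if_pos hbA] at hk
        omega
      · exact Or.inl h0
    obtain ⟨q, hq⟩ := hXdvd
    refine ⟨(Polynomial.taylor (-b)) q, ?_⟩
    have hGq := congrArg (Polynomial.taylor (-b)) hq
    rw [taylor_taylor, neg_add_cancel, taylor_zero, taylor_mul] at hGq
    rw [hGq]
    congr 1
    rw [taylor_apply, pow_comp, X_comp, map_neg, ← sub_eq_add_neg]
  have hprod : (∏ b ∈ B, (X - C b) ^ (if b ∈ -A then m - 1 else m)) ∣ G := by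
    apply Finset.prod_dvd_of_coprime
    · intro b _ b' _ hne
      exact (Polynomial.pairwise_coprime_X_sub_C Function.injective_id hne).pow
    · exact hdvdG
  have hdeg2 : ∑ b ∈ B, (if b ∈ -A then m - 1 else m) ≤ d := by
    have h1 := Polynomial.natDegree_le_of_dvd hprod hG0
    calc ∑ b ∈ B, (if b ∈ -A then m - 1 else m)
        = (∏ b ∈ B, (X - C b) ^ (if b ∈ -A then m - 1 else m) : Polynomial (ZMod p)).natDegree := by
          rw [natDegree_prod _ _ (fun b _ => pow_ne_zero _ (X_sub_C_ne_zero b))]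
          exact Finset.sum_congr rfl fun b _ => by rw [natDegree_pow, natDegree_X_sub_C, mul_one]
      _ ≤ G.natDegree := h1
      _ ≤ d := hdegG
  have hsplit : ∑ b ∈ B, (if b ∈ -A then m - 1 else m) =
      (B ∩ -A).card * (m - 1) + (B \ -A).card * m := by
    rw [Finset.sum_ite, Finset.sum_const, Finset.sum_const, smul_eq_mul, smul_eq_mul,
      Finset.filter_mem_eq_inter, ← Finset.sdiff_eq_filter]
  have hkn : (B ∩ -A).card ≤ n := Finset.card_le_card Finset.inter_subset_left
  have hcard : (B \ -A).card = n - (B ∩ -A).card := by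
    have := Finset.card_sdiff_add_card_inter B (-A)
    omega
  have hfinal : (B ∩ -A).card * (m - 1) + (n - (B ∩ -A).card) * m ≤ d := by
    rw [hsplit, hcard] at hdeg2
    exact hdeg2
  set k₀ := (B ∩ -A).card with hk₀
  zify [hm1, hkn] at hfinal ⊢
  nlinarith [hfinal]
end

section
/- Let p be a prime and let d be a positive integer dividing p − 1 with d < p − 1. Let Z_d = {z ∈ 𝔽_p : z^d = 1}. If A, B ⊆ 𝔽_p are finite sets with A + B = Z_d, then |A| · |B| = d and all sums are distinct, i.e., the map A × B → 𝔽_p given by (a, b) ↦ a + b is injective. -/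
/-!
Write `m = #A`, `N = d + m - 1`, and let `f = ∑ a ∈ A, (X + a) ^ N / ∏ a' ≠ a, (a - a')`
be the divided difference of `y ↦ (X + y) ^ N` at the nodes `A`. Divided differences at `m`
nodes kill polynomials of degree `< m - 1` and send `y ^ (m - 1)` to `1`, so `f` has degree `d`
with leading coefficient `N.choose d`, which is nonzero in `𝔽_p` because `N < p`. For `b ∈ B`,
all `(a + b) ^ d` equal `1`, so the same computation shows that `f - 1` vanishes to order `m`
at `b`. Hence `m * #B ≤ d = #(A + B) ≤ m * #B`, and equality in the last, trivial, bound means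
that all sums are distinct.
-/

open Pointwise

open Polynomial Finset

theorem Nat.Prime.not_dvd_choose_of_lt {p n k : ℕ} (hp : p.Prime) (hkn : k ≤ n) (hn : n < p) :
    ¬ p ∣ n.choose k := fun h => by
  have : p ∣ n.factorial :=
    Nat.choose_mul_factorial_mul_factorial hkn ▸ (h.mul_right _).mul_right _
  exact absurd ((hp.dvd_factorial).1 this) (by omega)

section DividedDifference

variable {F : Type*} [Field F] [DecidableEq F]

lemma sum_add_pow_div_prod_erase_sub (A : Finset F) (b : F) {t : ℕ} (ht : t < #A) :
    ∑ a ∈ A, (a + b) ^ t / ∏ a' ∈ A.erase a, (a - a') = if t = #A - 1 then 1 else 0 := by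
  have hdeg : ((X + C b) ^ t).degree < (#A : WithBot ℕ) := by
    rw [degree_pow, degree_X_add_C, nsmul_one]; exact_mod_cast ht
  have := Lagrange.coeff_eq_sum (v := id) (Set.injOn_id _) hdeg
  simp only [eval_pow, eval_add, eval_X, eval_C, id] at this
  rw [← this, coeff_X_add_C_pow]
  split_ifs with h
  · simp [h]
  · rw [Nat.choose_eq_zero_of_lt (by omega), Nat.cast_zero, mul_zero]

/-- The divided difference of `y ↦ (X + y) ^ N` at the nodes `A`. -/
noncomputable def dividedDiffPow (A : Finset F) (N : ℕ) : F[X] :=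
  ∑ a ∈ A, C (∏ a' ∈ A.erase a, (a - a'))⁻¹ * (X + C a) ^ N

lemma coeff_dividedDiffPow_comp (A : Finset F) (N : ℕ) (b : F) (k : ℕ) :
    ((dividedDiffPow A N).comp (X + C b)).coeff k =
      N.choose k * ∑ a ∈ A, (a + b) ^ (N - k) / ∏ a' ∈ A.erase a, (a - a') := by
  simp only [dividedDiffPow, Polynomial.sum_comp, mul_comp, C_comp, pow_comp, add_comp, X_comp,
    add_assoc, ← C_add, finsetSum_coeff, coeff_C_mul, coeff_X_add_C_pow, mul_sum]
  refine sum_congr rfl fun a _ => ?_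
  rw [add_comm b a]
  ring

lemma coeff_dividedDiffPow (A : Finset F) (N k : ℕ) :
    (dividedDiffPow A N).coeff k =
      N.choose k * ∑ a ∈ A, a ^ (N - k) / ∏ a' ∈ A.erase a, (a - a') := by
  simpa using coeff_dividedDiffPow_comp A N 0 k

variable {A : Finset F} {d : ℕ}

lemma coeff_dividedDiffPow_of_lt {k : ℕ} (hk : d < k) :
    (dividedDiffPow A (d + #A - 1)).coeff k = 0 := by
  rw [coeff_dividedDiffPow]
  rcases le_or_gt k (d + #A - 1) with hkN | hNk
  · have := sum_add_pow_div_prod_erase_sub A 0 (t := d + #A - 1 - k) (by omega)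
    rw [if_neg (by omega)] at this
    simp only [add_zero] at this
    rw [this, mul_zero]
  · rw [Nat.choose_eq_zero_of_lt hNk, Nat.cast_zero, zero_mul]

lemma coeff_dividedDiffPow_self (hA : A.Nonempty) :
    (dividedDiffPow A (d + #A - 1)).coeff d = (d + #A - 1).choose d := by
  have := sum_add_pow_div_prod_erase_sub A 0 (t := d + #A - 1 - d) (by have := hA.card_pos; omega)
  rw [if_pos (by omega)] at this
  simp only [add_zero] at this
  rw [coeff_dividedDiffPow, this, mul_one]

lemma X_pow_dvd_dividedDiffPow_comp_sub_one {b : F} (hAb : ∀ a ∈ A, (a + b) ^ d = 1) :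
    X ^ #A ∣ (dividedDiffPow A (d + #A - 1)).comp (X + C b) - 1 := by
  refine X_pow_dvd_iff.2 fun k hk => ?_
  have hpow : ∀ a ∈ A, (a + b) ^ (d + #A - 1 - k) = (a + b) ^ (#A - 1 - k) := fun a ha => by
    rw [show d + #A - 1 - k = d + (#A - 1 - k) by omega, pow_add, hAb a ha, one_mul]
  rw [coeff_sub, coeff_dividedDiffPow_comp, sum_congr rfl fun a ha => by rw [hpow a ha],
    sum_add_pow_div_prod_erase_sub A b (by omega), coeff_one]
  rcases Nat.eq_zero_or_pos k with rfl | hk0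
  · simp
  · rw [if_neg (by omega), if_neg (by omega), mul_zero, sub_zero]

end DividedDifference

theorem card_mul_card_le_of_forall_add_pow_eq_one {F : Type*} [Field F] [DecidableEq F]
    {A B : Finset F} {d : ℕ} (hd : 0 < d) (hAB : ∀ a ∈ A, ∀ b ∈ B, (a + b) ^ d = 1)
    (hchoose : ((d + #A - 1).choose d : F) ≠ 0) :
    #A * #B ≤ d := by
  rcases A.eq_empty_or_nonempty with rfl | hA
  · simp
  set f := dividedDiffPow A (d + #A - 1) - 1
  have hcoeff_d : f.coeff d = (d + #A - 1).choose d := by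
    rw [coeff_sub, coeff_dividedDiffPow_self hA, coeff_one, if_neg hd.ne', sub_zero]
  have hf : f ≠ 0 := fun h => hchoose (by rw [← hcoeff_d, h, coeff_zero])
  have hdeg : f.natDegree ≤ d := natDegree_le_iff_coeff_eq_zero.2 fun k hk => by
    rw [coeff_sub, coeff_dividedDiffPow_of_lt hk, coeff_one, if_neg (by omega), sub_zero]
  have hdvd : ∏ b ∈ B, (X - C b) ^ #A ∣ f := by
    refine prod_dvd_of_coprime (fun b _ b' _ hbb' => ?_) fun b hb => ?_
    · exact (isCoprime_X_sub_C_of_isUnit_sub (sub_ne_zero.2 hbb').isUnit).pow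
    · rw [X_sub_C_pow_dvd_iff, sub_comp, one_comp]
      exact X_pow_dvd_dividedDiffPow_comp_sub_one fun a ha => hAB a ha b hb
  calc #A * #B = (∏ b ∈ B, (X - C b) ^ #A).natDegree := by
        rw [natDegree_prod _ _ fun b _ => pow_ne_zero _ (X_sub_C_ne_zero b)]
        simp [mul_comm]
    _ ≤ f.natDegree := natDegree_le_of_dvd hdvd hf
    _ ≤ d := hdeg

theorem ZMod.card_nthRootsFinset_one_of_dvd {p d : ℕ} [Fact p.Prime] (hdvd : d ∣ p - 1) :
    #(nthRootsFinset d (1 : ZMod p)) = d := by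
  obtain ⟨g, hg⟩ := IsCyclic.exists_ofOrder_eq_natCard (α := (ZMod p)ˣ)
  have hprim : IsPrimitiveRoot (g : ZMod p) (p - 1) := by
    rw [← ZMod.card_units p, ← Nat.card_eq_fintype_card, ← hg, ← orderOf_units]
    exact IsPrimitiveRoot.orderOf _
  obtain ⟨k, hk⟩ := hdvd
  exact (hprim.pow (Nat.sub_pos_of_lt (Fact.out : p.Prime).one_lt) (hk.trans (mul_comm _ _)))
    |>.card_nthRootsFinset

theorem sumset_eq_roots_of_unity_card_and_unique_sums
    (p : ℕ) (hp : p.Prime) (d : ℕ) (hd : 0 < d)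
    (hdvd : d ∣ p - 1) (hlt : d < p - 1)
    (A B : Finset (ZMod p))
    (h : (↑(A + B) : Set (ZMod p)) = {z : ZMod p | z ^ d = 1}) :
    A.card * B.card = d ∧
      ∀ a ∈ A, ∀ a' ∈ A, ∀ b ∈ B, ∀ b' ∈ B, a + b = a' + b' → a = a' ∧ b = b' := by
  have : Fact p.Prime := ⟨hp⟩
  have hAB : A + B = nthRootsFinset d (1 : ZMod p) := by
    ext z
    rw [← mem_coe, h, mem_nthRootsFinset hd]
    rfl
  have hcard : #(A + B) = d := by rw [hAB, ZMod.card_nthRootsFinset_one_of_dvd hdvd]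
  obtain ⟨hA, hB⟩ := add_nonempty.1 (card_pos.1 (hcard ▸ hd))
  have h2d : 2 * d ≤ p - 1 := by
    obtain ⟨k, hk⟩ := hdvd
    nlinarith [show 2 ≤ k by by_contra; interval_cases k <;> omega]
  have hsmall : d + #A - 1 < p := by
    have := (card_le_card_add_right hB).trans hcard.le
    omega
  have hupper : #A * #B ≤ d :=
    card_mul_card_le_of_forall_add_pow_eq_one hd
      (fun a ha b hb => (mem_nthRootsFinset hd _).1 (hAB ▸ add_mem_add ha hb))
      (by
        rw [Ne, ZMod.natCast_eq_zero_iff]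
        exact hp.not_dvd_choose_of_lt (by have := hA.card_pos; omega) hsmall)
  have heq : #A * #B = d := le_antisymm hupper (hcard ▸ card_add_le)
  refine ⟨heq, fun a ha a' ha' b hb b' hb' hsum => ?_⟩
  have hinj := card_add_iff.1 (hcard.trans heq.symm)
  simpa using hinj (Set.mk_mem_prod ha hb) (Set.mk_mem_prod ha' hb') hsum
end

section
/- Let p be a prime and let d be a positive integer dividing p − 1 with d < p − 1. Let Z_d = {z ∈ 𝔽_p : z^d = 1}. If A, B ⊆ 𝔽_p are finite sets with A + B = Z_d ∪ {0}, then all nonzero sums are distinct: for all a, a' ∈ A and b, b' ∈ B with a + b = a' + b' ≠ 0, one has a = a' and b = b'. -/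
open Pointwise

section HP

open Polynomial Finset

variable {p : ℕ} [Fact p.Prime]

/-- Hanson–Petridis / Stepanov-type bound: if all sums `a + b` (`a ∈ A`, `b ∈ B`) are zero
or `d`-th roots of unity, then `|B| * |A| ≤ d + #{a ∈ A : -a ∈ B}`. -/
lemma hp_bound (d : ℕ) (hd : 0 < d) (h2d : 2 * d ≤ p - 1)
    (A B : Finset (ZMod p)) (hB2 : 2 ≤ B.card) (hBd : B.card ≤ d + 1)
    (hS : ∀ a ∈ A, ∀ b ∈ B, a + b = 0 ∨ (a + b) ^ d = 1) :
    B.card * A.card ≤ d + (A.filter (fun a => -a ∈ B)).card := by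
  classical
  set n := B.card with hn
  set M := n - 1 with hM
  have hM1 : 1 ≤ M := by omega
  have hMn : M + 1 = n := by omega
  have hMd : M ≤ d := by omega
  have hp2 : p ≥ 2 := (Fact.out : p.Prime).two_le
  -- Step 1: a nontrivial linear relation
  have hni : ¬ LinearIndependent (ZMod p)
      (fun b : ↥B => (fun j : Fin (n - 1) => (b : ZMod p) ^ (j : ℕ))) := by
    intro hli
    have hcard := hli.fintype_card_le_finrank
    rw [Module.finrank_pi, Fintype.card_coe, Fintype.card_fin] at hcard
    omega
  obtain ⟨g, hg0, bw, hbw⟩ := Fintype.not_linearIndependent_iff.mp hni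
  set c : ZMod p → ZMod p := fun x => if hx : x ∈ B then g ⟨x, hx⟩ else 0 with hc
  have hcval : ∀ b : ↥B, c (b : ZMod p) = g b := by
    intro b; simp [hc, b.2]
  have hσ : ∀ j : ℕ, j < n - 1 → ∑ b ∈ B, c b * b ^ j = 0 := by
    intro j hj
    have h1 := congrFun hg0 ⟨j, hj⟩
    simp only [Finset.sum_apply, Pi.smul_apply, smul_eq_mul, Pi.zero_apply] at h1
    rw [← Finset.sum_attach B (fun b => c b * b ^ j)]
    rw [← h1]
    rw [Finset.univ_eq_attach]
    exact Finset.sum_congr rfl fun b _ => by rw [hcval b]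
  have hcb : ∃ b ∈ B, c b ≠ 0 := ⟨bw, bw.2, by rw [hcval bw]; exact hbw⟩
  -- Step 2: shifted sums vanish
  have hA0 : ∀ (t : ZMod p) (k : ℕ), k < n - 1 → ∑ b ∈ B, c b * (t + b) ^ k = 0 := by
    intro t k hk
    calc ∑ b ∈ B, c b * (t + b) ^ k
        = ∑ b ∈ B, ∑ j ∈ Finset.range (k + 1),
            (t ^ j * (k.choose j : ZMod p)) * (c b * b ^ (k - j)) := by
          refine Finset.sum_congr rfl fun b _ => ?_
          rw [add_pow, Finset.mul_sum]
          exact Finset.sum_congr rfl fun j _ => by ring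
      _ = ∑ j ∈ Finset.range (k + 1),
            (t ^ j * (k.choose j : ZMod p)) * ∑ b ∈ B, c b * b ^ (k - j) := by
          rw [Finset.sum_comm]
          exact Finset.sum_congr rfl fun j _ => by rw [Finset.mul_sum]
      _ = 0 := by
          refine Finset.sum_eq_zero fun j hj => ?_
          rw [hσ (k - j) (by omega), mul_zero]
  -- Step 3: top sum nonzero (Vandermonde-type)
  have hσtop : ∑ b ∈ B, c b * b ^ (n - 1) ≠ 0 := by
    intro htop
    have hall : ∀ j : ℕ, j < n → ∑ b ∈ B, c b * b ^ j = 0 := by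
      intro j hj
      rcases lt_or_eq_of_le (Nat.lt_succ_iff.mp (by omega : j < (n - 1) + 1)) with h | h
      · exact hσ j h
      · rw [h]; exact htop
    obtain ⟨b₀, hb₀B, hb₀⟩ := hcb
    apply hb₀
    set q : (ZMod p)[X] := ∏ b' ∈ B.erase b₀, (X - C b') with hq
    have hqdeg : q.natDegree = n - 1 := by
      rw [hq, Polynomial.natDegree_prod _ _ (fun b' _ => X_sub_C_ne_zero b')]
      simp only [natDegree_X_sub_C]
      rw [Finset.sum_const, Finset.card_erase_of_mem hb₀B, smul_eq_mul, mul_one]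
    have hqe0 : ∀ b ∈ B, b ≠ b₀ → q.eval b = 0 := by
      intro b hb hne
      rw [hq, Polynomial.eval_prod]
      exact Finset.prod_eq_zero (Finset.mem_erase.mpr ⟨hne, hb⟩) (by simp)
    have hsingle : ∑ b ∈ B, c b * q.eval b = c b₀ * q.eval b₀ :=
      Finset.sum_eq_single_of_mem b₀ hb₀B (fun b hb hne => by rw [hqe0 b hb hne, mul_zero])
    have hzero : ∑ b ∈ B, c b * q.eval b = 0 := by
      calc ∑ b ∈ B, c b * q.eval b
          = ∑ b ∈ B, ∑ j ∈ Finset.range n, q.coeff j * (c b * b ^ j) := by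
            refine Finset.sum_congr rfl fun b _ => ?_
            rw [Polynomial.eval_eq_sum_range' (show q.natDegree < n by rw [hqdeg]; omega) b,
              Finset.mul_sum]
            exact Finset.sum_congr rfl fun j _ => by ring
        _ = ∑ j ∈ Finset.range n, q.coeff j * ∑ b ∈ B, c b * b ^ j := by
            rw [Finset.sum_comm]
            exact Finset.sum_congr rfl fun j _ => by rw [Finset.mul_sum]
        _ = 0 := Finset.sum_eq_zero fun j hj => by
            rw [hall j (Finset.mem_range.mp hj), mul_zero]
    have hqb₀ : q.eval b₀ ≠ 0 := by
      rw [hq, Polynomial.eval_prod]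
      refine Finset.prod_ne_zero_iff.mpr fun b' hb' => ?_
      have : b' ≠ b₀ := (Finset.mem_erase.mp hb').1
      simp only [eval_sub, eval_X, eval_C]
      exact sub_ne_zero.mpr (Ne.symm this)
    have := hsingle.symm.trans hzero
    exact (mul_eq_zero.mp this).resolve_right hqb₀
  -- Step 4: the auxiliary polynomial
  set P : (ZMod p)[X] :=
    ∑ b ∈ B, C (c b) * ((X + C b) ^ (d + M) - (X + C b) ^ M) with hP
  have hcomp : ∀ (t : ZMod p) (i : ℕ),
      (P.comp (X + C t)).coeff i
        = ((d + M).choose i : ZMod p) * (∑ b ∈ B, c b * (t + b) ^ (d + M - i))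
          - (M.choose i : ZMod p) * (∑ b ∈ B, c b * (t + b) ^ (M - i)) := by
    intro t i
    have hPc : P.comp (X + C t)
        = ∑ b ∈ B, C (c b) * ((X + C (t + b)) ^ (d + M) - (X + C (t + b)) ^ M) := by
      rw [hP, ← Polynomial.coe_compRingHom_apply, map_sum]
      refine Finset.sum_congr rfl fun b _ => ?_
      simp only [Polynomial.coe_compRingHom_apply, mul_comp, sub_comp, pow_comp, add_comp,
        X_comp, C_comp]
      rw [add_assoc, ← C_add]
    rw [hPc, Polynomial.finset_sum_coeff]
    rw [show ((d + M).choose i : ZMod p) * (∑ b ∈ B, c b * (t + b) ^ (d + M - i))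
          - (M.choose i : ZMod p) * (∑ b ∈ B, c b * (t + b) ^ (M - i))
        = ∑ b ∈ B, (c b * ((t + b) ^ (d + M - i) * ((d + M).choose i : ZMod p))
            - c b * ((t + b) ^ (M - i) * (M.choose i : ZMod p))) by
      rw [Finset.sum_sub_distrib, Finset.mul_sum, Finset.mul_sum]
      congr 1
      · exact Finset.sum_congr rfl fun b _ => by ring
      · exact Finset.sum_congr rfl fun b _ => by ring]
    refine Finset.sum_congr rfl fun b _ => ?_
    rw [Polynomial.coeff_C_mul, Polynomial.coeff_sub, Polynomial.coeff_X_add_C_pow,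
      Polynomial.coeff_X_add_C_pow, mul_sub]
  have hPcoeff : ∀ i : ℕ,
      P.coeff i
        = ((d + M).choose i : ZMod p) * (∑ b ∈ B, c b * b ^ (d + M - i))
          - (M.choose i : ZMod p) * (∑ b ∈ B, c b * b ^ (M - i)) := by
    intro i
    have h0 := hcomp 0 i
    rw [C_0, add_zero, Polynomial.comp_X] at h0
    simpa using h0
  have hdeg : P.natDegree ≤ d := by
    refine Polynomial.natDegree_le_iff_coeff_eq_zero.mpr fun N hN => ?_
    rw [hPcoeff N]
    have h2 : (M.choose N : ZMod p) = 0 := by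
      rw [Nat.choose_eq_zero_of_lt (by omega)]; exact Nat.cast_zero
    rcases le_or_gt N (d + M) with hc | hc
    · rw [hσ (d + M - N) (by omega), mul_zero, zero_sub, h2, zero_mul, neg_zero]
    · rw [Nat.choose_eq_zero_of_lt hc, Nat.cast_zero, zero_mul, zero_sub, h2, zero_mul,
        neg_zero]
  have hcd : P.coeff d ≠ 0 := by
    rw [hPcoeff d]
    have e1 : d + M - d = M := by omega
    have h2 : (M.choose d : ZMod p) * (∑ b ∈ B, c b * b ^ (M - d)) = 0 := by
      rcases lt_or_eq_of_le hMd with h | h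
      · rw [Nat.choose_eq_zero_of_lt h, Nat.cast_zero, zero_mul]
      · rw [show M - d = 0 by omega]
        have : ∑ b ∈ B, c b * b ^ (0 : ℕ) = 0 := hσ 0 (by omega)
        rw [this, mul_zero]
    rw [e1, h2, sub_zero]
    refine mul_ne_zero ?_ hσtop
    intro h0
    rw [ZMod.natCast_eq_zero_iff] at h0
    have hdvdfac : (d + M).choose d ∣ (d + M).factorial := by
      have hfac := Nat.choose_mul_factorial_mul_factorial (Nat.le_add_right d M)
      exact ⟨d.factorial * (d + M - d).factorial, by rw [← hfac]; ring⟩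
    have hpf : p ∣ (d + M).factorial := h0.trans hdvdfac
    have hple := (Nat.Prime.dvd_factorial (Fact.out : p.Prime)).mp hpf
    omega
  have hPne : P ≠ 0 := fun hz => hcd (by rw [hz, Polynomial.coeff_zero])
  -- Step 5: divisibility at each point of A
  set e : ZMod p → ℕ := fun a => if -a ∈ B then n - 1 else n with he
  have hdvd : ∀ a ∈ A, (X - C a) ^ (e a) ∣ P := by
    intro a ha
    have hXdvd : X ^ (e a) ∣ P.comp (X + C a) := by
      rw [Polynomial.X_pow_dvd_iff]
      intro i hi
      have hea : e a ≤ M + 1 := by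
        show (if -a ∈ B then n - 1 else n) ≤ M + 1
        split <;> omega
      have hiM : i ≤ M := by omega
      rw [hcomp a i]
      rcases Nat.eq_zero_or_pos i with rfl | hi1
      · simp only [Nat.choose_zero_right, Nat.cast_one, one_mul, Nat.sub_zero]
        rw [sub_eq_zero]
        refine Finset.sum_congr rfl fun b hb => ?_
        rcases hS a ha b hb with h0 | h1
        · rw [h0, zero_pow (by omega), zero_pow (by omega)]
        · rw [show d + M = d + M from rfl, pow_add, h1, one_mul]
      · have hs2 : ∑ b ∈ B, c b * (a + b) ^ (M - i) = 0 := hA0 a (M - i) (by omega)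
        have hs1 : ∑ b ∈ B, c b * (a + b) ^ (d + M - i) = 0 := by
          have : ∑ b ∈ B, c b * (a + b) ^ (d + M - i)
              = ∑ b ∈ B, c b * (a + b) ^ (M - i) := by
            refine Finset.sum_congr rfl fun b hb => ?_
            rcases hS a ha b hb with h0 | h1
            · have hBa : -a ∈ B := by
                have : b = -a := by
                  have := h0
                  linear_combination this
                rw [← this]; exact hb
              have heaeq : e a = n - 1 := by
                show (if -a ∈ B then n - 1 else n) = n - 1
                exact if_pos hBa
              have hMi : 1 ≤ M - i := by omega
              rw [h0, zero_pow (by omega), zero_pow (by omega)]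
            · rw [show d + M - i = d + (M - i) by omega, pow_add, h1, one_mul]
          rw [this, hs2]
        rw [hs1, hs2, mul_zero, mul_zero, sub_zero]
    obtain ⟨R, hR⟩ := hXdvd
    have hback : P = ((X : (ZMod p)[X]) ^ (e a) * R).comp (X - C a) := by
      rw [← hR, Polynomial.comp_assoc]
      have : (X + C a).comp (X - C a) = (X : (ZMod p)[X]) := by
        rw [add_comp, X_comp, C_comp, sub_add_cancel]
      rw [this, Polynomial.comp_X]
    rw [hback, mul_comp, pow_comp, X_comp]
    exact dvd_mul_right _ _
  -- Step 6: the product divides P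
  have hprod : (∏ a ∈ A, (X - C a) ^ (e a)) ∣ P := by
    refine Finset.prod_dvd_of_coprime ?_ (fun a ha => hdvd a ha)
    intro a ha a' ha' hne
    exact (Polynomial.isCoprime_X_sub_C_of_isUnit_sub
      (sub_ne_zero.mpr hne).isUnit).pow
  have hdegprod : (∏ a ∈ A, (X - C a) ^ (e a)).natDegree = ∑ a ∈ A, e a := by
    rw [Polynomial.natDegree_prod _ _
      (fun a _ => pow_ne_zero _ (X_sub_C_ne_zero a))]
    exact Finset.sum_congr rfl fun a _ => by
      rw [Polynomial.natDegree_pow, natDegree_X_sub_C, mul_one]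
  have hsum_le : ∑ a ∈ A, e a ≤ d := by
    have h1 := Polynomial.natDegree_le_of_dvd hprod hPne
    rw [hdegprod] at h1
    exact h1.trans hdeg
  -- Step 7: arithmetic
  set r0 := (A.filter (fun a => -a ∈ B)).card with hr0
  have hsplit : ∑ a ∈ A, e a + r0 = n * A.card := by
    rw [← Finset.sum_filter_add_sum_filter_not A (fun a => -a ∈ B) e]
    have hs1 : ∑ a ∈ A.filter (fun a => -a ∈ B), e a = r0 * (n - 1) := by
      rw [Finset.sum_congr rfl (fun a ha =>
        show (if -a ∈ B then n - 1 else n) = n - 1 from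
          if_pos (Finset.mem_filter.mp ha).2)]
      rw [Finset.sum_const, smul_eq_mul]
    have hs2 : ∑ a ∈ A.filter (fun a => ¬ -a ∈ B), e a
        = (A.filter (fun a => ¬ -a ∈ B)).card * n := by
      rw [Finset.sum_congr rfl (fun a ha =>
        show (if -a ∈ B then n - 1 else n) = n from
          if_neg (Finset.mem_filter.mp ha).2)]
      rw [Finset.sum_const, smul_eq_mul]
    have hcards : r0 + (A.filter (fun a => ¬ -a ∈ B)).card = A.card := by
      rw [hr0]
      exact Finset.card_filter_add_card_filter_not _
    rw [hs1, hs2]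
    set m2 := (A.filter (fun a => ¬ -a ∈ B)).card
    obtain ⟨k, hk⟩ : ∃ k, n = k + 1 := ⟨n - 1, by omega⟩
    rw [hk, Nat.add_sub_cancel, ← hcards]
    ring
  omega

end HP

theorem sumset_eq_roots_of_unity_union_zero_unique_nonzero_sums
    (p : ℕ) (hp : p.Prime) (d : ℕ) (hd : 0 < d)
    (hdvd : d ∣ p - 1) (hlt : d < p - 1)
    (A B : Finset (ZMod p))
    (h : (↑(A + B) : Set (ZMod p)) = {z : ZMod p | z ^ d = 1} ∪ {0}) :
    ∀ a ∈ A, ∀ a' ∈ A, ∀ b ∈ B, ∀ b' ∈ B,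
      a + b = a' + b' → a + b ≠ 0 → a = a' ∧ b = b' := by
  classical
  haveI : Fact p.Prime := ⟨hp⟩
  intro a₀ ha₀ a₁ ha₁ b₀ hb₀ b₁ hb₁ hsum hne0
  by_contra hcon
  have hane : a₀ ≠ a₁ := by
    intro hh
    apply hcon
    refine ⟨hh, ?_⟩
    rw [hh] at hsum
    exact add_left_cancel hsum
  have hbne : b₀ ≠ b₁ := by
    intro hh
    apply hane
    rw [hh] at hsum
    exact add_right_cancel hsum
  have hmem : ∀ z : ZMod p, z ∈ A + B ↔ (z ^ d = 1 ∨ z = 0) := by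
    intro z
    rw [← Finset.mem_coe, h]
    simp only [Set.mem_union, Set.mem_setOf_eq, Set.mem_singleton_iff]
  have hS : ∀ a ∈ A, ∀ b ∈ B, a + b = 0 ∨ (a + b) ^ d = 1 := fun a ha b hb =>
    ((hmem _).mp (Finset.add_mem_add ha hb)).symm
  have hp2 : 2 ≤ p := hp.two_le
  have h2d : 2 * d ≤ p - 1 := by
    obtain ⟨k, hk⟩ := hdvd
    rcases k with _ | _ | k
    · omega
    · omega
    · calc 2 * d = d * 2 := by ring
        _ ≤ d * (k + 1 + 1) := Nat.mul_le_mul_left d (by omega)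
        _ = p - 1 := hk.symm
  have h0d : ¬ ((0 : ZMod p) ^ d = 1) := by
    rw [zero_pow hd.ne']
    exact fun hh => zero_ne_one hh
  set μ : Finset (ZMod p) := (A + B).filter (fun z => z ≠ 0) with hμ
  have hμmem : ∀ z : ZMod p, z ∈ μ ↔ z ^ d = 1 := by
    intro z
    rw [hμ, Finset.mem_filter, hmem z]
    constructor
    · rintro ⟨h1 | h1, h2⟩
      · exact h1
      · exact absurd h1 h2
    · intro h1
      refine ⟨Or.inl h1, ?_⟩
      intro hz; rw [hz] at h1; exact h0d h1
  have hμle : μ.card ≤ d := by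
    have hsub : μ ⊆ (Polynomial.nthRoots d (1 : ZMod p)).toFinset := by
      intro z hz
      rw [Multiset.mem_toFinset, Polynomial.mem_nthRoots hd]
      exact (hμmem z).mp hz
    calc μ.card ≤ _ := Finset.card_le_card hsub
      _ ≤ Multiset.card (Polynomial.nthRoots d (1 : ZMod p)) := Multiset.toFinset_card_le _
      _ ≤ d := Polynomial.card_nthRoots d 1
  have hμge : d ≤ μ.card := by
    have hdvdu : d ∣ Fintype.card (ZMod p)ˣ := by
      rw [ZMod.card_units]; exact hdvd
    have hcnt := IsCyclic.card_orderOf_eq_totient (α := (ZMod p)ˣ) hdvdu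
    have hpos : 0 < (Finset.univ.filter (fun a : (ZMod p)ˣ => orderOf a = d)).card := by
      rw [hcnt]; exact Nat.totient_pos.mpr hd
    obtain ⟨ζ, hζmem⟩ := Finset.card_pos.mp hpos
    have hζ : orderOf ζ = d := (Finset.mem_filter.mp hζmem).2
    set J : Finset (ZMod p) :=
      (Finset.range d).image (fun k => ((ζ ^ k : (ZMod p)ˣ) : ZMod p)) with hJ
    have hJcard : J.card = d := by
      rw [hJ, Finset.card_image_of_injOn, Finset.card_range]
      intro i hi j hj hij
      have hi' : i < orderOf ζ := by rw [hζ]; exact Finset.mem_range.mp hi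
      have hj' : j < orderOf ζ := by rw [hζ]; exact Finset.mem_range.mp hj
      exact pow_injOn_Iio_orderOf hi' hj' (Units.ext hij)
    have hJsub : J ⊆ μ := by
      intro z hz
      rw [hJ] at hz
      obtain ⟨k, -, rfl⟩ := Finset.mem_image.mp hz
      rw [hμmem]
      have h2 : (ζ ^ k) ^ d = 1 := by
        calc (ζ ^ k) ^ d = (ζ ^ d) ^ k := by rw [← pow_mul, ← pow_mul, mul_comm]
          _ = 1 := by rw [← hζ, pow_orderOf_eq_one, one_pow]
      rw [← Units.val_pow_eq_pow_val, h2, Units.val_one]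
    calc d = J.card := hJcard.symm
      _ ≤ μ.card := Finset.card_le_card hJsub
  have hμcard : μ.card = d := le_antisymm hμle hμge
  set r0 := (A.filter (fun a => -a ∈ B)).card with hr0
  set T := A ×ˢ B with hT
  set Zs := T.filter (fun q => q.1 + q.2 = 0) with hZs
  set Ns := T.filter (fun q => ¬ q.1 + q.2 = 0) with hNs
  have hTcard : Zs.card + Ns.card = A.card * B.card := by
    rw [hZs, hNs, Finset.card_filter_add_card_filter_not, hT, Finset.card_product]
  have hZcard : Zs.card = r0 := by
    rw [hZs, hr0]
    refine Finset.card_bij (fun q _ => q.1) ?_ ?_ ?_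
    · intro q hq
      obtain ⟨hqT, hq0⟩ := Finset.mem_filter.mp hq
      rw [hT, Finset.mem_product] at hqT
      refine Finset.mem_filter.mpr ⟨hqT.1, ?_⟩
      have hq2 : q.2 = -q.1 := by linear_combination hq0
      rw [← hq2]; exact hqT.2
    · intro q hq q' hq' heq
      obtain ⟨hqT, hq0⟩ := Finset.mem_filter.mp hq
      obtain ⟨hqT', hq0'⟩ := Finset.mem_filter.mp hq'
      have heq' : q.1 = q'.1 := heq
      have h1 : q.2 = -q.1 := by linear_combination hq0
      have h2 : q'.2 = -q'.1 := by linear_combination hq0'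
      exact Prod.ext heq' (by rw [h1, h2, heq'])
    · intro a ha
      obtain ⟨haA, haB⟩ := Finset.mem_filter.mp ha
      exact ⟨(a, -a), Finset.mem_filter.mpr
        ⟨by rw [hT]; exact Finset.mem_product.mpr ⟨haA, haB⟩, by simp⟩, rfl⟩
  have hNge : d + 1 ≤ Ns.card := by
    have hmaps : ∀ q ∈ Ns, q.1 + q.2 ∈ μ := by
      intro q hq
      obtain ⟨hqT, hq0⟩ := Finset.mem_filter.mp hq
      rw [hT, Finset.mem_product] at hqT
      rw [hμ, Finset.mem_filter]
      exact ⟨Finset.add_mem_add hqT.1 hqT.2, hq0⟩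
    rw [Finset.card_eq_sum_card_fiberwise hmaps]
    have hlow : ∀ z ∈ μ, 1 ≤ (Ns.filter (fun q => q.1 + q.2 = z)).card := by
      intro z hz
      have hz' := Finset.mem_filter.mp hz
      obtain ⟨a, ha, b, hb, hab⟩ := Finset.mem_add.mp hz'.1
      refine Finset.card_pos.mpr ⟨(a, b), Finset.mem_filter.mpr ⟨?_, hab⟩⟩
      refine Finset.mem_filter.mpr ⟨?_, ?_⟩
      · rw [hT]; exact Finset.mem_product.mpr ⟨ha, hb⟩
      · rw [hab]; exact hz'.2
    have hstrict : ∃ z ∈ μ, 1 < (Ns.filter (fun q => q.1 + q.2 = z)).card := by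
      refine ⟨a₀ + b₀, ?_, ?_⟩
      · rw [hμ, Finset.mem_filter]
        exact ⟨Finset.add_mem_add ha₀ hb₀, hne0⟩
      · rw [Finset.one_lt_card]
        refine ⟨(a₀, b₀), ?_, (a₁, b₁), ?_, ?_⟩
        · refine Finset.mem_filter.mpr ⟨Finset.mem_filter.mpr ⟨?_, ?_⟩, rfl⟩
          · rw [hT]; exact Finset.mem_product.mpr ⟨ha₀, hb₀⟩
          · exact hne0
        · refine Finset.mem_filter.mpr ⟨Finset.mem_filter.mpr ⟨?_, ?_⟩, hsum.symm⟩
          · rw [hT]; exact Finset.mem_product.mpr ⟨ha₁, hb₁⟩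
          · rw [← hsum]; exact hne0
        · intro hh
          exact hane (congrArg Prod.fst hh)
    have hlt' : ∑ z ∈ μ, 1 < ∑ z ∈ μ, (Ns.filter (fun q => q.1 + q.2 = z)).card :=
      Finset.sum_lt_sum hlow hstrict
    have hsum1 : ∑ z ∈ μ, 1 = d := by rw [Finset.sum_const, smul_eq_mul, mul_one, hμcard]
    omega
  have hB2 : 2 ≤ B.card := Finset.one_lt_card.mpr ⟨b₀, hb₀, b₁, hb₁, hbne⟩
  have hABcard : (A + B).card ≤ d + 1 := by
    have hsplit := Finset.card_filter_add_card_filter_not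
      (s := A + B) (p := fun z => z ≠ 0)
    have hz1 : ((A + B).filter (fun z => ¬ z ≠ 0)).card ≤ 1 := by
      refine Finset.card_le_one.mpr ?_
      intro x hx y hy
      have hx0 : x = 0 := not_not.mp (Finset.mem_filter.mp hx).2
      have hy0 : y = 0 := not_not.mp (Finset.mem_filter.mp hy).2
      rw [hx0, hy0]
    rw [← hμ] at hsplit
    omega
  have hBd : B.card ≤ d + 1 := by
    have hle : B.card ≤ (A + B).card := by
      refine Finset.card_le_card_of_injOn (fun b => a₀ + b)
        (fun b hb => Finset.add_mem_add ha₀ hb) ?_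
      intro x _ y _ hxy
      exact add_left_cancel hxy
    exact hle.trans hABcard
  have hHP := hp_bound d hd h2d A B hB2 hBd hS
  rw [mul_comm] at hHP
  omega
end

section
/- Let p be a prime and let d be a positive integer dividing p − 1 with d < p − 1. Let Z_d = {z ∈ 𝔽_p : z^d = 1}. If A ⊆ 𝔽_p is a finite set such that A − A ⊆ Z_d ∪ {0}, then |A| · (|A| − 1) ≤ d. -/
open Pointwise Polynomial Finset

/-!
Stepanov's method. Let `n = |A| - 1` and `w_a = ∏_{c ∈ A, c ≠ a} (a - c)`. Lagrange interpolation
gives `∑_a (b - a)^m / w_a = (-1)^n [m = n]` for `m ≤ n`, so the polynomial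
`Q = ∑_a (X - a)^(d+n) / w_a - (-1)^n` has degree at most `d`, with `X^d`-coefficient
`(-1)^n C(d+n, d) ≠ 0`. Since `(b - a)^d = 1` for distinct `a, b ∈ A`, the first `n` Taylor
coefficients of `Q` at `b ∈ A` reduce to the same moments, and they cancel: `Q` vanishes to order `n`
at every point of `A`, so `|A| n ≤ deg Q ≤ d`. Over `𝔽_p` the binomial coefficient is nonzero because
`n ≤ d` (the `a - a₀` are distinct `d`-th roots of unity) and `2d ≤ p - 1`.
-/

namespace Polynomial

theorem X_sub_C_pow_dvd_iff_coeff_taylor {R : Type*} [CommRing R] {f : R[X]} {b : R} {n : ℕ} :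
    (X - C b) ^ n ∣ f ↔ ∀ t < n, (taylor b f).coeff t = 0 := by
  rw [← X_pow_dvd_iff, ← map_dvd_iff (taylorEquiv b)]
  change taylor b ((X - C b) ^ n) ∣ taylor b f ↔ _
  rw [taylor_pow, map_sub, taylor_X, taylor_C, add_sub_cancel_right]

theorem card_mul_le_natDegree_of_X_sub_C_pow_dvd {R : Type*} [CommRing R] [IsDomain R]
    {f : R[X]} (hf : f ≠ 0) {A : Finset R} {n : ℕ}
    (h : ∀ b ∈ A, (X - C b) ^ n ∣ f) : #A * n ≤ f.natDegree := by
  classical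
  have hroots : n • A.val ≤ f.roots := Multiset.le_iff_count.2 fun b => by
    by_cases hb : b ∈ A
    · simpa [Multiset.count_nsmul, count_roots, Multiset.count_eq_one_of_mem A.nodup hb,
        le_rootMultiplicity_iff hf] using h b hb
    · simp [hb]
  simpa [mul_comm] using (Multiset.card_le_card hroots).trans (card_roots' f)

end Polynomial

theorem card_le_succ_of_sub_pow_eq_one {R : Type*} [CommRing R] [IsDomain R] {A : Finset R}
    {d : ℕ} (hd : 0 < d) (hA : ∀ a ∈ A, ∀ b ∈ A, a ≠ b → (a - b) ^ d = 1) : #A ≤ d + 1 := by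
  classical
  obtain rfl | ⟨a₀, ha₀⟩ := A.eq_empty_or_nonempty
  · simp
  have hmaps : Set.MapsTo (· - a₀) (A.erase a₀) (nthRootsFinset d (1 : R)) := fun a ha => by
    rw [mem_coe, mem_nthRootsFinset hd]
    exact hA _ (mem_of_mem_erase ha) _ ha₀ (ne_of_mem_erase ha)
  have hinj := card_le_card_of_injOn _ hmaps sub_left_injective.injOn
  have hroots : #(nthRootsFinset d (1 : R)) ≤ d :=
    (Multiset.toFinset_card_le _).trans (card_nthRoots d 1)
  rw [card_erase_of_mem ha₀] at hinj
  omega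

theorem sub_pow_add_eq_of_sub_pow_eq_one {R : Type*} [CommRing R] {A : Finset R} {d m : ℕ}
    (hm : m ≠ 0) (hA : ∀ a ∈ A, ∀ b ∈ A, a ≠ b → (a - b) ^ d = 1) {a b : R} (ha : a ∈ A)
    (hb : b ∈ A) : (a - b) ^ (d + m) = (a - b) ^ m := by
  obtain rfl | hab := eq_or_ne a b
  · simp [hm]
  · rw [pow_add, hA a ha b hb hab, one_mul]

section WeightedPowerSum

variable {K : Type*} [Field K] [DecidableEq K] (A : Finset K) {n : ℕ}

theorem sum_sub_pow_div_prod_erase (hn : #A = n + 1) (b : K) {m : ℕ} (hm : m ≤ n) :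
    ∑ a ∈ A, (b - a) ^ m / ∏ c ∈ A.erase a, (a - c) = if m = n then (-1) ^ m else 0 := by
  have hdeg : ((X - C b) ^ m).degree < (#A : WithBot ℕ) := by
    rw [degree_pow, degree_X_sub_C, nsmul_one]
    exact_mod_cast (by omega : m < #A)
  have key := Lagrange.coeff_eq_sum (v := id) (Set.injOn_id _) hdeg
  simp only [eval_pow, eval_sub, eval_X, eval_C, id, hn, Nat.add_sub_cancel] at key
  calc ∑ a ∈ A, (b - a) ^ m / ∏ c ∈ A.erase a, (a - c)
      = (-1) ^ m * ∑ a ∈ A, (a - b) ^ m / ∏ c ∈ A.erase a, (a - c) := by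
        rw [mul_sum]
        refine sum_congr rfl fun a _ => ?_
        rw [← neg_sub, neg_pow, mul_div_assoc]
    _ = _ := by
        rw [← key, sub_eq_add_neg, ← C_neg, coeff_X_add_C_pow]
        split_ifs with h
        · simp [h]
        · simp [Nat.choose_eq_zero_of_lt (lt_of_le_of_ne hm h)]

noncomputable def weightedPowerSum (D : ℕ) : K[X] :=
  ∑ a ∈ A, C (∏ c ∈ A.erase a, (a - c))⁻¹ * (X - C a) ^ D

theorem coeff_taylor_weightedPowerSum (D : ℕ) (b : K) (t : ℕ) :
    (taylor b (weightedPowerSum A D)).coeff t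
      = D.choose t * ∑ a ∈ A, (b - a) ^ (D - t) / ∏ c ∈ A.erase a, (a - c) := by
  simp only [weightedPowerSum, map_sum, taylor_mul, taylor_pow, map_sub, taylor_C, taylor_X,
    finsetSum_coeff, mul_sum]
  refine sum_congr rfl fun a _ => ?_
  rw [add_sub_assoc, ← C_sub, coeff_C_mul, coeff_X_add_C_pow]
  ring

theorem natDegree_weightedPowerSum_le (hn : #A = n + 1) (d : ℕ) :
    (weightedPowerSum A (d + n)).natDegree ≤ d := by
  refine natDegree_le_iff_coeff_eq_zero.2 fun i hi => ?_
  rw [← taylor_zero (weightedPowerSum A _), coeff_taylor_weightedPowerSum]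
  rcases lt_or_ge (d + n) i with hD | hD
  · simp [Nat.choose_eq_zero_of_lt hD]
  · rw [sum_sub_pow_div_prod_erase A hn 0 (by omega), if_neg (by omega), mul_zero]

theorem coeff_weightedPowerSum_self (hn : #A = n + 1) (d : ℕ) :
    (weightedPowerSum A (d + n)).coeff d = (d + n).choose d * (-1) ^ n := by
  rw [← taylor_zero (weightedPowerSum A _), coeff_taylor_weightedPowerSum, Nat.add_sub_cancel_left,
    sum_sub_pow_div_prod_erase A hn 0 le_rfl, if_pos rfl]

theorem X_sub_C_pow_dvd_weightedPowerSum_sub (hn : #A = n + 1) {d : ℕ}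
    (hA : ∀ a ∈ A, ∀ b ∈ A, a ≠ b → (a - b) ^ d = 1) {b : K} (hb : b ∈ A) :
    (X - C b) ^ n ∣ weightedPowerSum A (d + n) - C ((-1) ^ n) := by
  rw [X_sub_C_pow_dvd_iff_coeff_taylor]
  intro t ht
  have hpow : ∀ a ∈ A, (b - a) ^ (d + n - t) = (b - a) ^ (n - t) := fun a ha => by
    rw [Nat.add_sub_assoc ht.le, sub_pow_add_eq_of_sub_pow_eq_one (by omega) hA hb ha]
  rw [map_sub, taylor_C, coeff_sub, coeff_taylor_weightedPowerSum, coeff_C,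
    sum_congr rfl fun a ha => by rw [hpow a ha], sum_sub_pow_div_prod_erase A hn b (by omega)]
  obtain rfl | ht0 := eq_or_ne t 0
  · simp
  · simp [ht0, show n - t ≠ n by omega]

end WeightedPowerSum

theorem card_mul_card_sub_one_le_of_sub_pow_eq_one {K : Type*} [Field K] {A : Finset K} {d : ℕ}
    (hd : d ≠ 0) (hA : ∀ a ∈ A, ∀ b ∈ A, a ≠ b → (a - b) ^ d = 1)
    (hchoose : ((d + (#A - 1)).choose d : K) ≠ 0) : #A * (#A - 1) ≤ d := by
  classical
  obtain hA0 | hpos := (#A).eq_zero_or_pos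
  · simp [hA0]
  obtain ⟨n, hn⟩ := Nat.exists_eq_add_one.2 hpos
  rw [hn, Nat.add_sub_cancel] at hchoose ⊢
  set Q := weightedPowerSum A (d + n) - C ((-1) ^ n)
  have hQd : Q.coeff d = (d + n).choose d * (-1) ^ n := by
    rw [coeff_sub, coeff_C, if_neg hd, sub_zero, coeff_weightedPowerSum_self A hn]
  have hQ : Q ≠ 0 := fun h0 => by simp [h0, hchoose] at hQd
  calc (n + 1) * n ≤ Q.natDegree :=
        hn ▸ card_mul_le_natDegree_of_X_sub_C_pow_dvd hQ fun b hb =>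
          X_sub_C_pow_dvd_weightedPowerSum_sub A hn hA hb
    _ ≤ d := natDegree_sub_C.trans_le (natDegree_weightedPowerSum_le A hn d)

theorem diffset_in_roots_of_unity_bound
    (p : ℕ) (hp : p.Prime) (d : ℕ) (hd : 0 < d)
    (hdvd : d ∣ p - 1) (hlt : d < p - 1)
    (A : Finset (ZMod p))
    (h : (↑(A - A) : Set (ZMod p)) ⊆ {z : ZMod p | z ^ d = 1} ∪ {0}) :
    A.card * (A.card - 1) ≤ d := by
  have := Fact.mk hp
  have hA : ∀ a ∈ A, ∀ b ∈ A, a ≠ b → (a - b) ^ d = 1 := fun a ha b hb hab =>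
    (h (mem_coe.2 (sub_mem_sub ha hb))).resolve_right (sub_ne_zero_of_ne hab)
  have hcard := card_le_succ_of_sub_pow_eq_one hd hA
  have hcofactor : d ≤ p - 1 - d := Nat.le_of_dvd (by omega) (Nat.dvd_sub hdvd dvd_rfl)
  refine card_mul_card_sub_one_le_of_sub_pow_eq_one hd.ne' hA ?_
  rw [Ne, ZMod.natCast_eq_zero_iff, ← hp.coprime_iff_not_dvd]
  exact hp.coprime_choose_of_lt (by omega) (by omega)
end

section
/- Let p be a prime with p ≡ 1 (mod 4), and let G_p be the Paley graph on 𝔽_p, i.e., the simple graph with vertex set 𝔽_p where distinct x and y are adjacent if and only if x − y is a nonzero square in 𝔽_p. Then the clique number of G_p satisfies ω(G_p) ≤ (√(2p − 1) + 1)/2. -/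
open Polynomial Finset

section Key

variable {p : ℕ} [Fact p.Prime]

/-- The top coefficient of a Lagrange basis polynomial is the nodal weight. -/
lemma paley_basis_coeff (A : Finset (ZMod p)) (a : ZMod p) (ha : a ∈ A) :
    (Lagrange.basis A id a).coeff (A.card - 1) = Lagrange.nodalWeight A id a := by
  have hinj : Set.InjOn (id : ZMod p → ZMod p) A := fun x _ y _ h => h
  have hdeg := Lagrange.natDegree_basis hinj ha
  rw [← hdeg, Polynomial.coeff_natDegree]
  unfold Lagrange.basis Lagrange.nodalWeight
  rw [Polynomial.leadingCoeff_prod]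
  refine Finset.prod_congr rfl fun b hb => ?_
  have hab : (a : ZMod p) ≠ b := by
    intro h; exact (Finset.mem_erase.mp hb).1 (h.symm)
  unfold Lagrange.basisDivisor
  rw [leadingCoeff_mul, leadingCoeff_C, leadingCoeff_X_sub_C, mul_one]

/-- Moments of the Lagrange/nodal weights. -/
lemma paley_moment (A : Finset (ZMod p)) (i : ℕ) (hi : i < A.card) :
    ∑ a ∈ A, Lagrange.nodalWeight A id a * a ^ i
      = if i = A.card - 1 then 1 else 0 := by
  classical
  have hinj : Set.InjOn (id : ZMod p → ZMod p) A := fun x _ y _ h => h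
  have hdeg : ((X : (ZMod p)[X]) ^ i).degree < A.card := by
    rw [degree_X_pow]
    exact_mod_cast hi
  have h1 : (X : (ZMod p)[X]) ^ i
      = Lagrange.interpolate A id (fun a => ((X : (ZMod p)[X]) ^ i).eval (id a)) :=
    Lagrange.eq_interpolate hinj hdeg
  have h2 := congrArg (fun q : (ZMod p)[X] => q.coeff (A.card - 1)) h1
  simp only [Lagrange.interpolate_apply, Polynomial.finset_sum_coeff,
    Polynomial.coeff_C_mul, eval_pow, eval_X, id_eq] at h2
  rw [Polynomial.coeff_X_pow] at h2
  calc ∑ a ∈ A, Lagrange.nodalWeight A id a * a ^ i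
      = ∑ a ∈ A, a ^ i * (Lagrange.basis A id a).coeff (A.card - 1) := by
        refine Finset.sum_congr rfl fun a ha => ?_
        rw [paley_basis_coeff A a ha, mul_comm]
    _ = if i = A.card - 1 then 1 else 0 := by
        rw [← h2]
        by_cases h : i = A.card - 1 <;> simp [h, eq_comm]

/-- The key Hanson–Petridis bound. -/
lemma paley_key (k : ℕ) (hk : 2 * k = p - 1)
    (A : Finset (ZMod p)) (hA : ∀ a ∈ A, ∀ b ∈ A, a ≠ b → (a - b) ^ k = 1) :
    A.card * (A.card - 1) ≤ k := by
  classical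
  have hp2 : 2 ≤ p := (Fact.out : p.Prime).two_le
  set n := A.card with hn
  rcases Nat.lt_or_ge n 2 with hn2 | hn2
  · have h0 : n - 1 = 0 := by omega
    rw [h0, Nat.mul_zero]
    exact Nat.zero_le _
  have hk1 : 1 ≤ k := by omega
  obtain ⟨a₀, ha₀⟩ := Finset.card_pos.mp (by omega : 0 < n)
  -- Step 1 : n - 1 ≤ k
  have hstep1 : n - 1 ≤ k := by
    have hfdeg : (X ^ k - C 1 : (ZMod p)[X]).natDegree = k :=
      Polynomial.natDegree_X_pow_sub_C
    have hfne : (X ^ k - C 1 : (ZMod p)[X]) ≠ 0 := by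
      intro h
      rw [h, Polynomial.natDegree_zero] at hfdeg
      omega
    have hsub : ((A.erase a₀).image (fun a => a - a₀))
        ⊆ (X ^ k - C 1 : (ZMod p)[X]).roots.toFinset := by
      intro x hx
      obtain ⟨a, ha, rfl⟩ := Finset.mem_image.mp hx
      rw [Multiset.mem_toFinset, Polynomial.mem_roots hfne]
      have h1 := hA a (Finset.mem_of_mem_erase ha) a₀ ha₀ (Finset.ne_of_mem_erase ha)
      simp [Polynomial.IsRoot, h1]
    have hcard1 : ((A.erase a₀).image (fun a => a - a₀)).card = n - 1 := by
      rw [Finset.card_image_of_injective _ sub_left_injective,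
        Finset.card_erase_of_mem ha₀]
    calc n - 1 = ((A.erase a₀).image (fun a => a - a₀)).card := hcard1.symm
      _ ≤ (X ^ k - C 1 : (ZMod p)[X]).roots.toFinset.card := Finset.card_le_card hsub
      _ ≤ Multiset.card (X ^ k - C 1 : (ZMod p)[X]).roots := Multiset.toFinset_card_le _
      _ ≤ (X ^ k - C 1 : (ZMod p)[X]).natDegree := Polynomial.card_roots' _
      _ = k := hfdeg
  -- Setup
  set w : ZMod p → ZMod p := Lagrange.nodalWeight A id with hw
  set N := k + (n - 1) with hN
  have hNp : N ≤ p - 1 := by omega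
  set S : ℕ → ZMod p := fun e => ∑ a ∈ A, w a * a ^ e with hS
  have hmom : ∀ i, i < n → S i = if i = n - 1 then 1 else 0 := fun i hi =>
    paley_moment A i hi
  set P : (ZMod p)[X] := ∑ a ∈ A, C (w a) * (X - C a) ^ N with hP
  have hchoose : ∀ j, j ≤ N → (N.choose j : ZMod p) ≠ 0 := by
    intro j hj h0
    have hdvd : p ∣ N.choose j := (ZMod.natCast_eq_zero_iff _ _).mp h0
    have hdvd2 : p ∣ N.factorial := by
      rw [← Nat.choose_mul_factorial_mul_factorial hj]
      exact (hdvd.mul_right _).mul_right _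
    have := (Nat.Prime.dvd_factorial (Fact.out : p.Prime)).mp hdvd2
    omega
  -- coefficients of P
  have hPcoeff : ∀ t, P.coeff t
      = (-1 : ZMod p) ^ (N - t) * (N.choose t : ZMod p) * S (N - t) := by
    intro t
    rw [hP, Polynomial.finset_sum_coeff]
    have h1 : ∀ a ∈ A, (C (w a) * (X - C a) ^ N).coeff t
        = (-1 : ZMod p) ^ (N - t) * (N.choose t : ZMod p) * (w a * a ^ (N - t)) := by
      intro a _
      rw [Polynomial.coeff_C_mul]
      have hx : (X - C a : (ZMod p)[X]) = X + C (-a) := by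
        rw [map_neg]; ring
      rw [hx, Polynomial.coeff_X_add_C_pow, neg_pow]
      ring
    rw [Finset.sum_congr rfl h1, ← Finset.mul_sum, hS]
  have hdegP : P.natDegree ≤ k := by
    rw [Polynomial.natDegree_le_iff_coeff_eq_zero]
    intro t ht
    rw [hPcoeff]
    rcases le_or_gt t N with h | h
    · rw [hmom (N - t) (by omega), if_neg (by omega), mul_zero]
    · rw [Nat.choose_eq_zero_of_lt h, Nat.cast_zero, mul_zero, zero_mul]
  have hPk : P.coeff k = (-1 : ZMod p) ^ (n - 1) * (N.choose k : ZMod p) := by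
    rw [hPcoeff, show N - k = n - 1 by omega, hmom (n - 1) (by omega), if_pos rfl,
      mul_one]
  have hPkne : P.coeff k ≠ 0 := by
    rw [hPk]
    exact mul_ne_zero (pow_ne_zero _ (neg_ne_zero.mpr one_ne_zero))
      (hchoose k (by omega))
  set c₀ : ZMod p := (-1 : ZMod p) ^ (n - 1) with hc₀
  set Q : (ZMod p)[X] := P - C c₀ with hQ
  have hQk : Q.coeff k = P.coeff k := by
    rw [hQ, Polynomial.coeff_sub, Polynomial.coeff_C, if_neg (by omega : ¬ k = 0),
      sub_zero]
  have hQne : Q ≠ 0 := by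
    intro h
    rw [h, Polynomial.coeff_zero] at hQk
    exact hPkne hQk.symm
  have hdegQ : Q.natDegree ≤ k := by
    refine le_trans (Polynomial.natDegree_sub_le _ _) ?_
    simp only [Polynomial.natDegree_C, max_le_iff]
    exact ⟨hdegP, Nat.zero_le _⟩
  -- divisibility at each node
  have hdvd : ∀ u ∈ A, (X - C u) ^ (n - 1) ∣ Q := by
    intro u hu
    have hsum_red : ∀ e, 1 ≤ e → (∑ a ∈ A, w a * (u - a) ^ (k + e))
        = ∑ a ∈ A, w a * (u - a) ^ e := by
      intro e he1
      refine Finset.sum_congr rfl fun a ha => ?_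
      by_cases hau : a = u
      · subst hau
        rw [sub_self, zero_pow (by omega), zero_pow (by omega)]
      · have h1 := hA u hu a ha (fun h => hau h.symm)
        rw [pow_add, h1, one_mul]
    have hsum_e : ∀ e, e ≤ n - 1 → (∑ a ∈ A, w a * (u - a) ^ e)
        = if e = n - 1 then c₀ else 0 := by
      intro e he
      have hexp : ∀ a : ZMod p, (u - a) ^ e
          = ∑ i ∈ Finset.range (e + 1),
              (-1 : ZMod p) ^ i * a ^ i * u ^ (e - i) * (e.choose i : ZMod p) := by
        intro a
        rw [show u - a = (-a) + u by ring, add_pow]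
        exact Finset.sum_congr rfl fun i _ => by rw [neg_pow]
      have hswap : ∑ a ∈ A, w a * (u - a) ^ e
          = ∑ i ∈ Finset.range (e + 1),
              (-1 : ZMod p) ^ i * S i * u ^ (e - i) * (e.choose i : ZMod p) := by
        simp_rw [hexp, Finset.mul_sum]
        rw [Finset.sum_comm]
        refine Finset.sum_congr rfl fun i _ => ?_
        have h2 : ∀ a ∈ A, w a * ((-1 : ZMod p) ^ i * a ^ i * u ^ (e - i) * (e.choose i : ZMod p))
            = ((-1 : ZMod p) ^ i * u ^ (e - i) * (e.choose i : ZMod p)) * (w a * a ^ i) :=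
          fun a _ => by ring
        rw [Finset.sum_congr rfl h2, ← Finset.mul_sum, hS]
        ring
      rw [hswap]
      by_cases he' : e = n - 1
      · subst he'
        rw [Finset.sum_eq_single_of_mem (n - 1) (Finset.mem_range.mpr (by omega))]
        · rw [hmom (n - 1) (by omega), if_pos rfl, Nat.sub_self, Nat.choose_self,
            Nat.cast_one, pow_zero, if_pos rfl, hc₀]
          ring
        · intro i hi hine
          rw [hmom i (by have := Finset.mem_range.mp hi; omega), if_neg hine]
          ring
      · rw [if_neg he']
        refine Finset.sum_eq_zero fun i hi => ?_
        have hilt : i < n - 1 := by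
          have := Finset.mem_range.mp hi; omega
        rw [hmom i (by omega), if_neg (by omega)]
        ring
    have hPu : P = ∑ j ∈ Finset.range (N + 1),
        (X - C u) ^ j * C ((∑ a ∈ A, w a * (u - a) ^ (N - j)) * (N.choose j : ZMod p)) := by
      rw [hP]
      have hexpand : ∀ a : ZMod p, (X - C a : (ZMod p)[X]) ^ N
          = ∑ j ∈ Finset.range (N + 1),
              (X - C u) ^ j * (C (u - a)) ^ (N - j) * ((N.choose j : ℕ) : (ZMod p)[X]) := by
        intro a
        rw [show (X - C a : (ZMod p)[X]) = (X - C u) + C (u - a) by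
          rw [map_sub]; ring, add_pow]
      simp_rw [hexpand, Finset.mul_sum]
      rw [Finset.sum_comm]
      refine Finset.sum_congr rfl fun j _ => ?_
      have h3 : ∀ a ∈ A, C (w a) * ((X - C u) ^ j * (C (u - a)) ^ (N - j)
            * ((N.choose j : ℕ) : (ZMod p)[X]))
          = (X - C u) ^ j * C (w a * (u - a) ^ (N - j) * (N.choose j : ZMod p)) := by
        intro a _
        rw [map_mul, map_mul, ← C_pow, ← C_eq_natCast]
        ring
      rw [Finset.sum_congr rfl h3, ← Finset.mul_sum]
      congr 1
      rw [map_mul, map_sum, Finset.sum_mul]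
      exact Finset.sum_congr rfl fun a _ => by rw [map_mul]
    have key0 : (∑ a ∈ A, w a * (u - a) ^ (N - 0)) * (N.choose 0 : ZMod p) = c₀ := by
      rw [Nat.sub_zero, Nat.choose_zero_right, Nat.cast_one, mul_one, hN,
        hsum_red (n - 1) (by omega), hsum_e (n - 1) le_rfl, if_pos rfl]
    have keyj : ∀ j, 1 ≤ j → j ≤ n - 2 →
        (∑ a ∈ A, w a * (u - a) ^ (N - j)) = 0 := by
      intro j h1 h2
      rw [show N - j = k + (n - 1 - j) by omega, hsum_red (n - 1 - j) (by omega),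
        hsum_e (n - 1 - j) (by omega), if_neg (by omega)]
    have hQsum : Q = ∑ j ∈ Finset.Ico (n - 1) (N + 1),
        (X - C u) ^ j * C ((∑ a ∈ A, w a * (u - a) ^ (N - j)) * (N.choose j : ZMod p)) := by
      have hsplit : ∑ j ∈ Finset.range (N + 1),
          (X - C u) ^ j * C ((∑ a ∈ A, w a * (u - a) ^ (N - j)) * (N.choose j : ZMod p))
          = (∑ j ∈ Finset.range (n - 1),
              (X - C u) ^ j * C ((∑ a ∈ A, w a * (u - a) ^ (N - j)) * (N.choose j : ZMod p)))
            + ∑ j ∈ Finset.Ico (n - 1) (N + 1),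
              (X - C u) ^ j * C ((∑ a ∈ A, w a * (u - a) ^ (N - j)) * (N.choose j : ZMod p)) := by
        simp only [Finset.range_eq_Ico]
        exact (Finset.sum_Ico_consecutive _ (Nat.zero_le _) (by omega : n - 1 ≤ N + 1)).symm
      have hlow : ∑ j ∈ Finset.range (n - 1),
          (X - C u) ^ j * C ((∑ a ∈ A, w a * (u - a) ^ (N - j)) * (N.choose j : ZMod p))
          = C c₀ := by
        rw [Finset.sum_eq_single_of_mem 0 (Finset.mem_range.mpr (by omega))]
        · rw [key0, pow_zero, one_mul]
        · intro j hj hj0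
          rw [keyj j (by omega) (by have := Finset.mem_range.mp hj; omega), zero_mul,
            map_zero, mul_zero]
      rw [hQ, hPu, hsplit, hlow]
      ring
    rw [hQsum]
    refine Finset.dvd_sum fun j hj => ?_
    exact Dvd.dvd.mul_right (pow_dvd_pow _ (Finset.mem_Ico.mp hj).1) _
  have hprod : (∏ u ∈ A, (X - C u) ^ (n - 1)) ∣ Q := by
    refine Finset.prod_dvd_of_coprime ?_ (fun u hu => hdvd u hu)
    intro u _ v _ huv
    exact (Polynomial.pairwise_coprime_X_sub_C (Function.injective_id) huv).pow
  have hcard : (∏ u ∈ A, (X - C u) ^ (n - 1)).natDegree = n * (n - 1) := by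
    rw [Polynomial.natDegree_prod _ _
      (fun u _ => pow_ne_zero _ (Polynomial.X_sub_C_ne_zero u))]
    simp only [Polynomial.natDegree_pow, Polynomial.natDegree_X_sub_C, mul_one]
    rw [Finset.sum_const, smul_eq_mul]
  calc n * (n - 1) = (∏ u ∈ A, (X - C u) ^ (n - 1)).natDegree := hcard.symm
    _ ≤ Q.natDegree := Polynomial.natDegree_le_of_dvd hprod hQne
    _ ≤ k := hdegQ

end Key

theorem paley_clique_number_bound
    (p : ℕ) (hp : p.Prime) (hp1 : p % 4 = 1)
    (G : SimpleGraph (ZMod p))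
    (hG : ∀ x y : ZMod p, G.Adj x y ↔ (x ≠ y ∧ ∃ s : ZMod p, s ≠ 0 ∧ x - y = s ^ 2)) :
    (G.cliqueNum : ℝ) ≤ (Real.sqrt (2 * p - 1) + 1) / 2 := by
  haveI : Fact p.Prime := ⟨hp⟩
  have hp2 : 2 ≤ p := hp.two_le
  have hp5 : 5 ≤ p := by
    rcases Nat.lt_or_ge p 5 with h | h
    · interval_cases p <;> simp_all
    · exact h
  set k := (p - 1) / 2 with hkdef
  have hk : 2 * k = p - 1 := by omega
  obtain ⟨s, hs⟩ := G.exists_isNClique_cliqueNum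
  set n := G.cliqueNum with hn
  have hA : ∀ a ∈ s, ∀ b ∈ s, a ≠ b → (a - b) ^ k = 1 := by
    intro a ha b hb hab
    have hadj : G.Adj a b := hs.isClique ha hb hab
    obtain ⟨-, t, ht0, hteq⟩ := (hG a b).mp hadj
    calc (a - b) ^ k = (t ^ 2) ^ k := by rw [hteq]
      _ = t ^ (2 * k) := by rw [← pow_mul, mul_comm]
      _ = t ^ (p - 1) := by rw [hk]
      _ = 1 := ZMod.pow_card_sub_one_eq_one ht0
  have hkey : n * (n - 1) ≤ k := by
    have h := paley_key k hk s hA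
    rwa [hs.card_eq] at h
  rcases Nat.eq_zero_or_pos n with h0 | h1
  · rw [h0, Nat.cast_zero]
    positivity
  · have hR : (n : ℝ) * ((n : ℝ) - 1) ≤ (k : ℝ) := by
      have h' : ((n * (n - 1) : ℕ) : ℝ) ≤ (k : ℝ) := Nat.cast_le.mpr hkey
      rw [Nat.cast_mul, Nat.cast_sub h1, Nat.cast_one] at h'
      exact h'
    have hkR : 2 * (k : ℝ) = (p : ℝ) - 1 := by
      have h2 : ((2 * k : ℕ) : ℝ) = ((p - 1 : ℕ) : ℝ) := by rw [hk]
      rw [Nat.cast_mul, Nat.cast_ofNat, Nat.cast_sub (by omega), Nat.cast_one] at h2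
      exact h2
    have hineq : (2 * (n : ℝ) - 1) ^ 2 ≤ 2 * (p : ℝ) - 1 := by nlinarith
    have h0 : (0 : ℝ) ≤ 2 * (n : ℝ) - 1 := by
      have h1' : (1 : ℝ) ≤ (n : ℝ) := by exact_mod_cast h1
      linarith
    have hsq : 2 * (n : ℝ) - 1 ≤ Real.sqrt (2 * (p : ℝ) - 1) := by
      calc 2 * (n : ℝ) - 1 = Real.sqrt ((2 * (n : ℝ) - 1) ^ 2) := (Real.sqrt_sq h0).symm
        _ ≤ Real.sqrt (2 * (p : ℝ) - 1) := Real.sqrt_le_sqrt hineq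
    linarith
end

section
/- Let p be a prime with p ≡ 1 (mod 4) and p > 1, and set d = (p − 1)/2. Let Z_d = {z ∈ 𝔽_p : z^d = 1} (the set of nonzero quadratic residues mod p). If there exists a finite set A ⊆ 𝔽_p with A ∸ A = Z_d, where A ∸ A = {a − a' : a, a' ∈ A, a ≠ a'}, then p = (n² + 1)/2 for some odd positive integer n. -/
/-!
Every difference of two distinct elements of `A` is a nonzero square, i.e. a root of `z ^ d = 1`,
and each of the `d` nonzero squares occurs; hence `d ≤ |A| (|A| - 1)`. Conversely, by the
Hanson–Petridis bound, every set `B` all of whose differences are roots of `z ^ d = 1`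
has `|B| (|B| - 1) ≤ d`. So `d = k (k - 1)` with `k = |A|`, and `2p = 4d + 2 = (2k - 1) ^ 2 + 1`.

The bound is proved by Stepanov's method. If `d < |B| (m + 1)` for a suitable `m`, a dimension
count gives polynomials `q a` (`a ∈ B`) of degree `≤ m`, not all zero, such that
`∑ ((X - a) ^ (d + 1) - (X - a)) q a`, which vanishes on `B`, has degree `< |B|` (so it is `0`)
and `∑ (X - a) q a` has degree `< d + m + 2 - |B| (m + 1)`. The resulting identity
`∑ (X - a) ^ (d + 1) q a = ∑ (X - a) q a` contradicts the linear independence of the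
polynomials `(X - a) ^ E X ^ i` modulo polynomials of low degree, which is proved by induction,
lowering `E` by differentiation and removing a point `a₀` by the substitution `X ↦ a₀ + 1 / X`.
-/

open Polynomial Finset

section Polynomial

variable {R : Type*} [CommRing R]

lemma natDegree_X_sub_C_pow_le (a : R) (E : ℕ) : ((X - C a) ^ E).natDegree ≤ E :=
  (natDegree_pow_le_of_le E (natDegree_X_sub_C_le a)).trans_eq (mul_one E)

lemma reflect_X_sub_C_pow_mul (a : R) (E : ℕ) {m : ℕ} {r : R[X]} (hr : r.natDegree ≤ m) :
    reflect (E + m) ((X - C a) ^ E * r) = (1 - C a * X) ^ E * reflect m r := by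
  rw [reflect_mul _ _ (natDegree_X_sub_C_pow_le a E) hr]
  congr 1
  induction E with
  | zero => simp
  | succ E ih =>
    rw [pow_succ, reflect_mul _ _ (natDegree_X_sub_C_pow_le a E) (natDegree_X_sub_C_le a), ih,
      pow_succ, reflect_sub, reflect_one_X, reflect_C, pow_one]

lemma reflect_finset_sum {ι : Type*} (N : ℕ) (s : Finset ι) (f : ι → R[X]) :
    reflect N (∑ i ∈ s, f i) = ∑ i ∈ s, reflect N (f i) :=
  map_sum (⟨⟨reflect N, reflect_zero⟩, fun f g => reflect_add f g N⟩ : R[X] →+ R[X]) f s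

lemma natDegree_le_of_mem_degreeLT_succ {f : R[X]} {m : ℕ} (h : f ∈ degreeLT R (m + 1)) :
    f.natDegree ≤ m :=
  natDegree_le_iff_degree_le.2 (mem_degreeLE.1 (degreeLT_succ_eq_degreeLE (R := R) ▸ h))

lemma degree_lt_of_coeff_eq_zero {f : R[X]} {n N : ℕ} (hf : f.natDegree < N)
    (h : ∀ k, n ≤ k → k < N → f.coeff k = 0) : f.degree < n := by
  rw [degree_lt_iff_coeff_zero]
  intro k hk
  rcases lt_or_ge k N with hkN | hkN
  · exact h k hk hkN
  · exact coeff_eq_zero_of_natDegree_lt (hf.trans_le hkN)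

lemma coeff_X_sub_C_pow_mul_add [Nontrivial R] {m : ℕ} {q : R[X]} (hq : q.natDegree ≤ m)
    (a : R) (n : ℕ) : ((X - C a) ^ n * q).coeff (n + m) = q.coeff m := by
  rw [coeff_mul_add_eq_of_natDegree_le (natDegree_X_sub_C_pow_le a n) hq]
  have hlead := ((monic_X_sub_C a).pow n).coeff_natDegree
  rw [(monic_X_sub_C a).natDegree_pow, natDegree_X_sub_C, mul_one] at hlead
  rw [hlead, one_mul]

lemma natDegree_sum_X_sub_C_mul_le_of_eq [Nontrivial R] (B : Finset R) {q : R → R[X]} {m n : ℕ}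
    (hq : ∀ a ∈ B, (q a).natDegree ≤ m) (hn : 2 ≤ n)
    (h : ∑ a ∈ B, (X - C a) ^ n * q a = ∑ a ∈ B, (X - C a) * q a) :
    (∑ a ∈ B, (X - C a) * q a).natDegree ≤ m := by
  have htop : ∀ k, (∑ a ∈ B, (X - C a) ^ k * q a).coeff (k + m) = ∑ a ∈ B, (q a).coeff m :=
    fun k => by
      rw [finsetSum_coeff]
      exact sum_congr rfl fun a ha => coeff_X_sub_C_pow_mul_add (hq a ha) a k
  have hdeg : (∑ a ∈ B, (X - C a) * q a).natDegree ≤ m + 1 :=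
    natDegree_sum_le_of_forall_le _ _ fun a ha =>
      natDegree_mul_le.trans (by have := natDegree_X_sub_C_le a; have := hq a ha; omega)
  rw [natDegree_le_iff_coeff_eq_zero]
  intro k hk
  rcases (Nat.succ_le_of_lt hk).eq_or_lt with rfl | hk'
  · -- coefficient `m + 1` on the right of `h` is coefficient `n + m` on the left, zero by degree
    have h1 := htop 1
    have h2 := htop n
    rw [h] at h2
    simp only [pow_one, add_comm 1 m] at h1
    rw [h1, ← h2]
    exact coeff_eq_zero_of_natDegree_lt (by omega)
  · exact coeff_eq_zero_of_natDegree_lt (by omega)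

lemma degree_derivative_lt_of_degree_lt_succ {f : R[X]} {M : ℕ} (hf : f.degree < ↑(M + 1)) :
    (derivative f).degree < M := by
  rw [degree_lt_iff_coeff_zero] at hf ⊢
  intro k hk
  rw [coeff_derivative, hf (k + 1) (by omega), zero_mul]

lemma derivative_X_sub_C_pow_succ_mul (a : R) (E : ℕ) (q : R[X]) :
    derivative ((X - C a) ^ (E + 1) * q) =
      (X - C a) ^ E * (C ((E : R) + 1) * q + (X - C a) * derivative q) := by
  rw [derivative_mul, derivative_X_sub_C_pow]
  simp only [add_tsub_cancel_right, Nat.cast_add, Nat.cast_one]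
  ring

lemma natDegree_X_sub_C_mul_derivative_le (a : R) (q : R[X]) :
    ((X - C a) * derivative q).natDegree ≤ q.natDegree := by
  rcases eq_or_ne q.natDegree 0 with hq | hq
  · simp [derivative_of_natDegree_zero hq]
  · have := natDegree_derivative_lt hq
    calc _ ≤ 1 + (derivative q).natDegree :=
          natDegree_mul_le.trans (Nat.add_le_add_right (natDegree_X_sub_C_le a) _)
      _ ≤ q.natDegree := by omega

lemma natDegree_eq_zero_of_derivative_eq_zero_of_le [IsDomain R] {f : R[X]} {N : ℕ}
    (hchar : ∀ c : ℕ, 0 < c → c ≤ N → (c : R) ≠ 0) (hf : f.natDegree ≤ N)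
    (h : derivative f = 0) : f.natDegree = 0 := by
  by_contra hf0
  obtain ⟨n, hn⟩ := Nat.exists_eq_add_one_of_ne_zero hf0
  have hcoeff := congrArg (coeff · n) h
  simp only [coeff_derivative, coeff_zero, ← hn] at hcoeff
  rcases mul_eq_zero.1 hcoeff with hlc | hc
  · exact hf0 (by simp [leadingCoeff_eq_zero.1 hlc])
  · exact hchar (n + 1) n.succ_pos (hn ▸ hf) (by exact_mod_cast hc)

end Polynomial

section ShiftedPowers

variable {F : Type*} [Field F]

lemma one_sub_C_mul_X_pow {a : F} (ha : a ≠ 0) (E : ℕ) :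
    (1 - C a * X) ^ E = C ((-a) ^ E) * (X - C a⁻¹) ^ E := by
  have : 1 - C a * X = C (-a) * (X - C a⁻¹) := by
    rw [mul_sub, ← C_mul, neg_mul, mul_inv_cancel₀ ha, C_neg, C_neg, C_1]
    ring
  rw [this, mul_pow, C_pow]

/-- The polynomials `(X - a) ^ E * X ^ i` (`a ∈ S`, `i ≤ m`) are linearly independent modulo
polynomials of degree `< M`. -/
def ShiftedPowersIndep (S : Finset F) (E m M : ℕ) : Prop :=
  ∀ q : F → F[X], (∀ a ∈ S, (q a).natDegree ≤ m) →
    (∑ a ∈ S, (X - C a) ^ E * q a).degree < (M : WithBot ℕ) → ∀ a ∈ S, q a = 0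

namespace ShiftedPowersIndep

variable [DecidableEq F] {S : Finset F} {E m M : ℕ}

lemma of_image_sub (a₀ : F) (h : ShiftedPowersIndep (S.image (· - a₀)) E m M) :
    ShiftedPowersIndep S E m M := by
  intro q hq hsum a ha
  have hshift : ∀ b, (X - C (b - a₀)) ^ E * taylor a₀ (q (b - a₀ + a₀)) =
      taylor a₀ ((X - C b) ^ E * q b) := by
    intro b
    rw [sub_add_cancel, taylor_mul, taylor_pow, map_sub (taylor a₀), taylor_X, taylor_C, C_sub]
    ring
  have key := h (fun b => taylor a₀ (q (b + a₀))) ?_ ?_ (a - a₀) (mem_image_of_mem _ ha)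
  · simpa using key
  · intro b' hb'
    obtain ⟨b, hb, rfl⟩ := mem_image.1 hb'
    simpa [natDegree_taylor] using hq b hb
  · rw [sum_image (fun x _ y _ => sub_left_inj.1)]
    simp_rw [hshift, ← map_sum, degree_taylor]
    exact hsum

lemma insert_zero (h0 : (0 : F) ∉ S) (h : ShiftedPowersIndep (S.image (·⁻¹)) E m (m + 1)) :
    ShiftedPowersIndep (insert 0 S) E m 0 := by
  intro q hq hsum
  rw [Nat.cast_zero, Nat.WithBot.lt_zero_iff, degree_eq_bot, sum_insert h0] at hsum
  have hne : ∀ a ∈ S, a ≠ 0 := fun a ha h => h0 (h ▸ ha)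
  -- reflecting at degree `E + m` exchanges the roles of the points `0` and `∞`
  have hrefl : ∑ a ∈ S.image (·⁻¹), (X - C a) ^ E * (C ((-a⁻¹) ^ E) * reflect m (q a⁻¹)) =
      -reflect m (q 0) := by
    have := congrArg (reflect (E + m)) hsum
    rw [reflect_add, reflect_finset_sum, reflect_zero,
      reflect_X_sub_C_pow_mul 0 E (hq 0 (mem_insert_self 0 S))] at this
    rw [sum_image (fun x _ y _ => inv_inj.1), eq_neg_iff_add_eq_zero, ← this, add_comm]
    simp only [C_0, zero_mul, sub_zero, one_pow, one_mul, inv_inv]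
    congr 1
    refine sum_congr rfl fun a ha => ?_
    rw [reflect_X_sub_C_pow_mul a E (hq a (mem_insert_of_mem ha)),
      one_sub_C_mul_X_pow (hne a ha)]
    ring
  have hS : ∀ a ∈ S, q a = 0 := by
    intro a ha
    have := h (fun b => C ((-b⁻¹) ^ E) * reflect m (q b⁻¹)) ?_ ?_ a⁻¹ (mem_image_of_mem _ ha)
    · simpa [hne a ha] using this
    · intro b' hb'
      obtain ⟨b, hb, rfl⟩ := mem_image.1 hb'
      exact (natDegree_C_mul_le _ _).trans (natDegree_reflect_le.trans
        (by simp [hq b (mem_insert_of_mem hb)]))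
    · rw [hrefl, degree_neg]
      exact degree_le_natDegree.trans_lt (WithBot.coe_lt_coe.2 (Nat.lt_succ_of_le
        (natDegree_reflect_le.trans (by simp [hq 0 (mem_insert_self 0 S)]))))
  intro a ha
  rcases mem_insert.1 ha with rfl | ha
  · rw [sum_eq_zero fun b hb => by rw [hS b hb, mul_zero], add_zero] at hsum
    exact (mul_eq_zero.1 hsum).resolve_left (pow_ne_zero _ (X_sub_C_ne_zero 0))
  · exact hS a ha

lemma succ (hchar : ∀ c : ℕ, 0 < c → c ≤ E + 1 + m → (c : F) ≠ 0)
    (h : ShiftedPowersIndep S E m M) : ShiftedPowersIndep S (E + 1) m (M + 1) := by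
  intro q hq hsum
  have hr := h (fun a => C ((E : F) + 1) * q a + (X - C a) * derivative (q a)) ?_ ?_
  · intro a ha
    have hder : derivative ((X - C a) ^ (E + 1) * q a) = 0 := by
      rw [derivative_X_sub_C_pow_succ_mul, hr a ha, mul_zero]
    have hdeg := natDegree_eq_zero_of_derivative_eq_zero_of_le hchar
      (natDegree_mul_le.trans (add_le_add (natDegree_X_sub_C_pow_le a _) (hq a ha))) hder
    by_contra hqa
    rw [natDegree_mul (pow_ne_zero _ (X_sub_C_ne_zero a)) hqa, natDegree_pow,
      natDegree_X_sub_C] at hdeg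
    omega
  · intro a ha
    exact (natDegree_add_le _ _).trans (max_le ((natDegree_C_mul_le _ _).trans (hq a ha))
      ((natDegree_X_sub_C_mul_derivative_le a _).trans (hq a ha)))
  · simp_rw [← derivative_X_sub_C_pow_succ_mul, ← map_sum]
    exact degree_derivative_lt_of_degree_lt_succ hsum

end ShiftedPowersIndep

open ShiftedPowersIndep in
theorem shiftedPowersIndep_of_le [DecidableEq F] {S : Finset F} {E m M : ℕ}
    (hchar : ∀ c : ℕ, 0 < c → c ≤ E + m → (c : F) ≠ 0) (hE : M + #S * (m + 1) ≤ E + m + 1) :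
    ShiftedPowersIndep S E m M := by
  generalize hs : #S = s at hE
  induction s generalizing S E M with
  | zero => simp [ShiftedPowersIndep, card_eq_zero.1 hs]
  | succ s ih =>
    induction M generalizing E with
    | zero =>
      obtain ⟨a₀, ha₀⟩ := card_pos.1 (by omega : 0 < #S)
      apply of_image_sub a₀
      rw [← insert_erase ha₀, image_insert, sub_self]
      refine insert_zero (by simp [sub_eq_zero]) (ih hchar ?_ (by linarith))
      rw [card_image_of_injective _ inv_injective, card_image_of_injective _ sub_left_injective,
        card_erase_of_mem ha₀, hs, Nat.add_sub_cancel]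
    | succ M ihM =>
      obtain ⟨E, rfl⟩ := Nat.exists_eq_add_one_of_ne_zero (show E ≠ 0 by rintro rfl; nlinarith)
      exact (ihM (fun c hc hcE => hchar c hc (by omega)) (by nlinarith)).succ hchar

end ShiftedPowers

lemma exists_ne_zero_forall_apply_eq_zero {K V ι : Type*} [Field K] [AddCommGroup V] [Module K V]
    [FiniteDimensional K V] [Fintype ι] (f : ι → V →ₗ[K] K)
    (h : Fintype.card ι < Module.finrank K V) : ∃ v ≠ 0, ∀ i, f i v = 0 := by
  obtain ⟨v, hv, hv0⟩ := Submodule.exists_mem_ne_zero_of_ne_bot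
    (LinearMap.ker_ne_bot_of_finrank_lt (f := LinearMap.pi f) (by simpa using h))
  exact ⟨v, hv0, fun i => congrFun (LinearMap.mem_ker.1 hv) i⟩

section Clique

variable {F : Type*} [Field F]

noncomputable def weightedSum {ι : Type*} [Fintype ι] (n : ℕ) (w : ι → F[X]) :
    (ι → degreeLT F n) →ₗ[F] F[X] :=
  ∑ i, LinearMap.mulLeft F (w i) ∘ₗ (degreeLT F n).subtype ∘ₗ LinearMap.proj i

lemma weightedSum_apply {ι : Type*} [Fintype ι] (n : ℕ) (w : ι → F[X]) (v : ι → degreeLT F n) :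
    weightedSum n w v = ∑ i, w i * v i := by
  simp [weightedSum]

lemma exists_ne_zero_sum_mul_coeff_eq_zero [DecidableEq F] (B : Finset F) (m : ℕ)
    (w₁ w₂ : F → F[X]) (I J : Finset ℕ) (hIJ : #I + #J < #B * (m + 1)) :
    ∃ q : F → F[X], (∀ a ∈ B, (q a).natDegree ≤ m) ∧ (∃ a ∈ B, q a ≠ 0) ∧
      (∀ k ∈ I, (∑ a ∈ B, w₁ a * q a).coeff k = 0) ∧
      ∀ k ∈ J, (∑ a ∈ B, w₂ a * q a).coeff k = 0 := by
  have hdim : Fintype.card (I ⊕ J) < Module.finrank F (B → degreeLT F (m + 1)) := by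
    rw [Module.finrank_pi_fintype]
    simpa [(degreeLTEquiv F (m + 1)).finrank_eq] using hIJ
  obtain ⟨v, hv0, hv⟩ := exists_ne_zero_forall_apply_eq_zero
    (Sum.elim (fun k : I => lcoeff F k ∘ₗ weightedSum (m + 1) (fun a : B => w₁ a))
      (fun k : J => lcoeff F k ∘ₗ weightedSum (m + 1) (fun a : B => w₂ a))) hdim
  let q : F → F[X] := fun x => if hx : x ∈ B then v ⟨x, hx⟩ else 0
  have hqv : ∀ w : F → F[X], ∑ a ∈ B, w a * q a = ∑ a : B, w a * v a := by
    intro w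
    rw [← sum_coe_sort]
    exact sum_congr rfl fun a _ => by simp [q, a.2]
  refine ⟨q, fun a ha => ?_, ?_, fun k hk => ?_, fun k hk => ?_⟩
  · simpa [q, ha] using natDegree_le_of_mem_degreeLT_succ (v ⟨a, ha⟩).2
  · by_contra! h0
    exact hv0 (funext fun a => Subtype.ext (by simpa [q, a.2] using h0 a a.2))
  · simpa [weightedSum_apply, hqv] using hv (Sum.inl ⟨k, hk⟩)
  · simpa [weightedSum_apply, hqv] using hv (Sum.inr ⟨k, hk⟩)

theorem card_mul_succ_le_of_pow_sub_eq_one [DecidableEq F] {d m : ℕ}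
    (hchar : ∀ c : ℕ, 0 < c → c ≤ 2 * d → (c : F) ≠ 0) {B : Finset F}
    (hB : ∀ x ∈ B, ∀ y ∈ B, x ≠ y → (x - y) ^ d = 1) (hmB : m + 2 ≤ #B) (hmd : m < d)
    (hBm : #B * (m + 1) ≤ d + m + 2) : #B * (m + 1) ≤ d := by
  by_contra! hlt
  -- `M + #B * (m + 1) = d + m + 2`, the most `shiftedPowersIndep_of_le` allows for `E = d + 1`
  set M := d + m + 2 - #B * (m + 1)
  let H : F → F[X] := fun a => (X - C a) ^ (d + 1) - (X - C a)
  obtain ⟨q, hq, ⟨a₀, ha₀, hqa₀⟩, hGcoeff, hTcoeff⟩ := exists_ne_zero_sum_mul_coeff_eq_zero B m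
    H (fun a => X - C a) (Ico #B (d + m + 2)) (Ico M (m + 1)) (by
      have : #B ≤ #B * (m + 1) := Nat.le_mul_of_pos_right _ m.succ_pos
      simp only [Nat.card_Ico]
      omega)
  have hG : ∑ a ∈ B, H a * q a = 0 := by
    apply eq_zero_of_degree_lt_of_eval_finset_eq_zero B
    · refine degree_lt_of_coeff_eq_zero (N := d + m + 2) ?_
        fun k hk hkN => hGcoeff k (mem_Ico.2 ⟨hk, hkN⟩)
      refine Nat.lt_succ_of_le (natDegree_sum_le_of_forall_le _ _ fun a ha => ?_)
      have hH : (H a).natDegree ≤ d + 1 := (natDegree_sub_le _ _).trans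
        (max_le (natDegree_X_sub_C_pow_le a _) ((natDegree_X_sub_C_le a).trans (by omega)))
      exact natDegree_mul_le.trans (by have := hq a ha; omega)
    · intro b hb
      rw [eval_finsetSum]
      refine sum_eq_zero fun a ha => ?_
      rcases eq_or_ne b a with rfl | hba
      · simp [H]
      · simp [H, pow_succ, hB b hb a ha hba]
  have hTeq : ∑ a ∈ B, (X - C a) ^ (d + 1) * q a = ∑ a ∈ B, (X - C a) * q a := by
    rw [← sub_eq_zero, ← sum_sub_distrib, ← hG]
    exact sum_congr rfl fun a _ => by ring
  have hT : (∑ a ∈ B, (X - C a) ^ (d + 1) * q a).degree < (M : WithBot ℕ) := by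
    rw [hTeq]
    exact degree_lt_of_coeff_eq_zero
      (Nat.lt_succ_of_le (natDegree_sum_X_sub_C_mul_le_of_eq B hq (by omega) hTeq))
      fun k hk hkm => hTcoeff k (mem_Ico.2 ⟨hk, hkm⟩)
  exact hqa₀ (shiftedPowersIndep_of_le (E := d + 1) (fun c hc hcd => hchar c hc (by omega))
    (by omega) q hq hT a₀ ha₀)

lemma exists_mul_succ_mem_Ioc {d s : ℕ} (hd : 0 < d) (hlo : (s + 1) * s ≤ d)
    (hhi : d < (s + 2) * (s + 1)) :
    ∃ m, m ≤ s ∧ m < d ∧ (s + 2) * (m + 1) ∈ Ioc d (d + m + 2) := by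
  simp only [mem_Ioc]
  by_cases hs : d < (s + 2) * s
  · obtain ⟨m, rfl⟩ := Nat.exists_eq_add_one_of_ne_zero (show s ≠ 0 by rintro rfl; simp at hs)
    exact ⟨m, by omega, by nlinarith, hs, by nlinarith⟩
  · exact ⟨s, le_rfl, by nlinarith, hhi, by nlinarith⟩

theorem card_mul_card_sub_one_le_of_pow_sub_eq_one [DecidableEq F] {d : ℕ} (hd : 0 < d)
    (hchar : ∀ c : ℕ, 0 < c → c ≤ 2 * d → (c : F) ≠ 0) {B : Finset F}
    (hB : ∀ x ∈ B, ∀ y ∈ B, x ≠ y → (x - y) ^ d = 1) : #B * (#B - 1) ≤ d := by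
  by_contra! hlt
  -- pass to a subset of the least size `t` with `d < t * (t - 1)`
  have hex : ∃ t, d < t * (t - 1) := ⟨#B, hlt⟩
  obtain ⟨t, ht, htmin⟩ : ∃ t, d < t * (t - 1) ∧ ∀ t' < t, ¬ d < t' * (t' - 1) :=
    ⟨Nat.find hex, Nat.find_spec hex, fun _ => Nat.find_min hex⟩
  obtain ⟨s, rfl⟩ : ∃ s, t = s + 2 := ⟨t - 2, by rcases t with _ | _ | t <;> simp_all⟩
  have hlo : (s + 1) * s ≤ d := by simpa using htmin (s + 1) (by omega)
  obtain ⟨B', hB'B, hB'⟩ := exists_subset_card_eq (show s + 2 ≤ #B from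
    not_lt.1 fun h => htmin _ h hlt)
  obtain ⟨m, hms, hmd, hIoc⟩ := exists_mul_succ_mem_Ioc hd hlo (by simpa using ht)
  rw [mem_Ioc, ← hB'] at hIoc
  have := card_mul_succ_le_of_pow_sub_eq_one hchar
    (fun x hx y hy => hB x (hB'B hx) y (hB'B hy)) (by omega) hmd hIoc.2
  omega

end Clique

lemma le_card_filter_pow_eq_one {K : Type*} [Field K] [Fintype K] [DecidableEq K] {d : ℕ}
    (hK : Fintype.card K = 2 * d + 1) : d ≤ #{z : K | z ^ d = 1} := by
  rcases Nat.eq_zero_or_pos d with rfl | hd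
  · exact Nat.zero_le _
  have hsub : univ.erase 0 ⊆ ({z | z ^ d = 1} : Finset K) ∪ nthRootsFinset d (-1 : K) := by
    intro z hz
    have h2d : (z ^ d - 1) * (z ^ d + 1) = 0 := by
      have hz1 : z ^ (2 * d) = 1 := by
        simpa [hK] using FiniteField.pow_card_sub_one_eq_one z (ne_of_mem_erase hz)
      linear_combination hz1
    rcases mul_eq_zero.1 h2d with h | h
    · simp [sub_eq_zero.1 h]
    · simp [mem_nthRootsFinset hd, eq_neg_of_add_eq_zero_left h]
  have hroots : #(nthRootsFinset d (-1 : K)) ≤ d :=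
    (nthRootsFinset_def d (-1 : K) ▸ Multiset.toFinset_card_le _).trans (card_nthRoots d _)
  have := card_le_card hsub
  rw [card_erase_of_mem (mem_univ 0), card_univ, hK] at this
  have := card_union_le ({z | z ^ d = 1} : Finset K) (nthRootsFinset d (-1 : K))
  omega

theorem restricted_diffset_decomposition_prime_form_general
    (p : ℕ) (hp : p.Prime) (hp1 : p % 4 = 1)
    (h : ∃ A : Finset (ZMod p),
      {x : ZMod p | ∃ a ∈ A, ∃ a' ∈ A, a ≠ a' ∧ a - a' = x} =
        {z : ZMod p | z ^ ((p - 1) / 2) = 1}) :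
    ∃ n : ℕ, Odd n ∧ 0 < n ∧ 2 * p = n ^ 2 + 1 := by
  have := Fact.mk hp
  obtain ⟨A, hA⟩ := h
  set d := (p - 1) / 2
  have hpd : p = 2 * d + 1 := by have := hp.two_le; omega
  have hd : 0 < d := by have := hp.two_le; omega
  have hdiff : ∀ z, z ^ d = 1 ↔ ∃ a ∈ A, ∃ a' ∈ A, a ≠ a' ∧ a - a' = z := fun z =>
    (Set.ext_iff.1 hA z).symm
  have hchar : ∀ c : ℕ, 0 < c → c ≤ 2 * d → (c : ZMod p) ≠ 0 := fun c hc hcd hc0 => by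
    have := Nat.le_of_dvd hc ((ZMod.natCast_eq_zero_iff c p).1 hc0)
    omega
  have hupper := card_mul_card_sub_one_le_of_pow_sub_eq_one hd hchar
    fun x hx y hy hxy => (hdiff _).2 ⟨x, hx, y, hy, hxy, rfl⟩
  have hlower : d ≤ #A * (#A - 1) :=
    calc d ≤ #{z : ZMod p | z ^ d = 1} := le_card_filter_pow_eq_one (by rw [ZMod.card, hpd])
      _ ≤ #(A.offDiag.image fun x => x.1 - x.2) := card_le_card fun z hz => by
        obtain ⟨a, ha, a', ha', hne, rfl⟩ := (hdiff z).1 (mem_filter.1 hz).2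
        exact mem_image.2 ⟨(a, a'), mem_offDiag.2 ⟨ha, ha', hne⟩, rfl⟩
      _ ≤ #A.offDiag := card_image_le
      _ = #A * (#A - 1) := by rw [offDiag_card, Nat.mul_sub_one]
  obtain ⟨k, hk⟩ := Nat.exists_eq_add_one_of_ne_zero (show #A ≠ 0 by
    rintro h0
    simp [h0] at hlower
    omega)
  rw [hk, Nat.add_sub_cancel] at hupper hlower
  refine ⟨2 * k + 1, odd_two_mul_add_one k, by omega, ?_⟩
  rw [hpd, ← le_antisymm hupper hlower]
  ring

theorem restricted_diffset_decomposition_prime_form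
    (p : ℕ) (hp : p.Prime) (hp1 : p % 4 = 1) (hp2 : 1 < p)
    (h : ∃ A : Finset (ZMod p),
      {x : ZMod p | ∃ a ∈ A, ∃ a' ∈ A, a ≠ a' ∧ a - a' = x} =
        {z : ZMod p | z ^ ((p - 1) / 2) = 1}) :
    ∃ n : ℕ, Odd n ∧ 0 < n ∧ 2 * p = n ^ 2 + 1 :=
  restricted_diffset_decomposition_prime_form_general p hp hp1 h
end

section
/- Let p be a prime, let χ : 𝔽_p → ℂ be a nontrivial multiplicative character (extended by χ(0) = 0), and let A, B ⊆ 𝔽_p be finite sets. Then |∑_{a ∈ A} ∑_{b ∈ B} χ(a + b)| ≤ √(p · |A| · |B|). -/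
/-!
Write `f a = ∑_{b ∈ B} χ(a + b)`. By Cauchy–Schwarz, `|∑_{a ∈ A} f a|² ≤ |A| ∑_{a ∈ 𝔽_p} |f a|²`,
and expanding the square, the complete sum over `a` is `∑_{b, b' ∈ B}` of the autocorrelation
`∑_a χ(a + b) χ̄(a + b')`. The latter is `p - 1` on the diagonal and `-1` off it (a Jacobi sum
`J(χ, χ⁻¹)` after a change of variables), so `∑_a |f a|² = p|B| - |B|² ≤ p|B|`.
-/

open Finset

lemma sq_norm_sum_le_card_mul_sum_sq_norm {ι E : Type*} [SeminormedAddCommGroup E]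
    (s : Finset ι) (f : ι → E) :
    ‖∑ i ∈ s, f i‖ ^ 2 ≤ #s * ∑ i ∈ s, ‖f i‖ ^ 2 :=
  (pow_le_pow_left₀ (norm_nonneg _) (norm_sum_le s f) 2).trans (sq_sum_le_card_mul_sum_sq ..)

namespace MulChar

variable {F R : Type*} [Field F] [CommRing R]

lemma apply_mul_inv_apply (χ : MulChar F R) (x y : F) : χ x * χ⁻¹ y = χ (x / y) := by
  rw [inv_apply', ← map_mul, div_eq_mul_inv]

variable [Fintype F]

lemma sum_apply_mul_inv_apply (χ : MulChar F R) :
    ∑ x, χ x * χ⁻¹ x = Fintype.card F - 1 := by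
  classical
  have hx : ∀ x, χ x * χ⁻¹ x = 1 - if x = 0 then 1 else 0 := fun x => by
    rcases eq_or_ne x 0 with rfl | hx
    · simp
    · simp [apply_mul_inv_apply, hx]
  simp [hx, sum_sub_distrib]

variable [IsDomain R] {χ : MulChar F R}

lemma sum_apply_mul_inv_apply_add (hχ : χ ≠ 1) {c : F} (hc : c ≠ 0) :
    ∑ x, χ x * χ⁻¹ (x + c) = -1 :=
  calc ∑ x, χ x * χ⁻¹ (x + c)
      = ∑ y, χ (-c * y) * χ⁻¹ (-c * y + c) :=
        (Fintype.sum_equiv (Equiv.mulLeft₀ (-c) (neg_ne_zero.mpr hc)) _ _ fun _ => rfl).symm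
    _ = ∑ y, χ (-1) * (χ y * χ⁻¹ (1 - y)) := by
        refine sum_congr rfl fun y _ => ?_
        rw [apply_mul_inv_apply, apply_mul_inv_apply, ← map_mul,
          show -c * y + c = c * (1 - y) by ring, neg_mul, ← mul_neg, mul_div_mul_left _ _ hc,
          neg_div, neg_one_mul]
    _ = χ (-1) * jacobiSum χ χ⁻¹ := by rw [← mul_sum]; rfl
    _ = -1 := by
        rw [jacobiSum_nontrivial_inv hχ, mul_neg, ← map_mul, neg_one_mul, neg_neg, map_one]

lemma sum_apply_add_mul_inv_apply_add [DecidableEq F] (hχ : χ ≠ 1) (b b' : F) :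
    ∑ x, χ (x + b) * χ⁻¹ (x + b') = if b = b' then (Fintype.card F : R) - 1 else -1 := by
  have hshift : ∑ x, χ (x + b) * χ⁻¹ (x + b') = ∑ x, χ x * χ⁻¹ (x + (b' - b)) :=
    Fintype.sum_equiv (Equiv.addRight b) _ _ fun x => by simp
  rw [hshift]
  split_ifs with h
  · rw [h, sub_self, sum_congr rfl fun x _ => by rw [add_zero], sum_apply_mul_inv_apply]
  · exact sum_apply_mul_inv_apply_add hχ (sub_ne_zero.mpr (Ne.symm h))

lemma sum_sum_apply_add_mul_sum_inv_apply_add (hχ : χ ≠ 1) (B : Finset F) :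
    ∑ x, (∑ b ∈ B, χ (x + b)) * ∑ b ∈ B, χ⁻¹ (x + b) = Fintype.card F * #B - #B ^ 2 := by
  classical
  calc _ = ∑ b ∈ B, ∑ b' ∈ B, ∑ x, χ (x + b) * χ⁻¹ (x + b') := by
        simp_rw [sum_mul_sum]
        rw [sum_comm]
        exact sum_congr rfl fun _ _ => sum_comm
    _ = ∑ b ∈ B, ∑ b' ∈ B, ((if b = b' then (Fintype.card F : R) else 0) - 1) := by
        simp_rw [sum_apply_add_mul_inv_apply_add hχ, apply_ite (· - (1 : R)), zero_sub]
    _ = _ := by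
        simp only [sum_sub_distrib, sum_ite_eq, sum_const, nsmul_eq_mul, mul_one, sum_ite_mem,
          inter_self]
        ring

lemma sum_sq_norm_sum_apply_add {χ : MulChar F ℂ} (hχ : χ ≠ 1) (B : Finset F) :
    ∑ x, ‖∑ b ∈ B, χ (x + b)‖ ^ 2 = Fintype.card F * #B - #B ^ 2 := by
  apply Complex.ofReal_injective
  push_cast
  simp_rw [← Complex.mul_conj', map_sum, ← Complex.star_def, star_apply']
  exact sum_sum_apply_add_mul_sum_inv_apply_add hχ B

end MulChar

theorem vinogradov_character_sum_bound
    (p : ℕ) (hp : p.Prime) (χ : MulChar (ZMod p) ℂ) (hχ : χ ≠ 1)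
    (A B : Finset (ZMod p)) :
    ‖∑ a ∈ A, ∑ b ∈ B, χ (a + b)‖ ≤
      Real.sqrt (p * A.card * B.card) := by
  have : Fact p.Prime := ⟨hp⟩
  set f := fun a => ∑ b ∈ B, χ (a + b)
  apply Real.le_sqrt_of_sq_le
  calc ‖∑ a ∈ A, f a‖ ^ 2
      ≤ #A * ∑ a ∈ A, ‖f a‖ ^ 2 := sq_norm_sum_le_card_mul_sum_sq_norm A f
    _ ≤ #A * ∑ a, ‖f a‖ ^ 2 := by gcongr; exact subset_univ A
    _ = #A * (p * #B - #B ^ 2) := by rw [MulChar.sum_sq_norm_sum_apply_add hχ, ZMod.card]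
    _ ≤ p * #A * #B := by nlinarith [sq_nonneg (#B : ℝ), (#A).cast_nonneg (α := ℝ)]
end
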